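/- arXiv:2308.01502 — 5 statements merged into one kernel-verified Lean document; each statement's English description precedes it below -/
import Mathlib

section
/- For all r ∈ ℕ ∪ {0} and all s, t ∈ ℕ⁺, there exists Ω = Ω(r,s,t) ∈ ℕ⁺ with the following property. Let G be a graph and let (W,Λ) be an (r,Ω)-web in G. Then one of the following holds: (a) G contains an induced subgraph isomorphic to K_t or to K_{t,t}; or (b) there exists S ⊆ W with |S| = s such that S is a stable set in G, for all three vertices x, y, z ∈ S the vertex x is anticomplete to Λ*_{y,z}, and for all distinct 2-subsets {x,y}, {x',y'} of S the sets Λ*_{x,y} and Λ*_{x',y'} are anticomplete in G. -/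
/-!
Common definitions: anticomplete sets, stable sets, induced paths,
and webs, following the paper's terminology.
-/

variable {V : Type} {α : Type}

/-- Two vertex sets `X` and `Y` are *anticomplete* in `G` if there is no edge of `G`
with an end in `X` and an end in `Y`. -/
def Anticomplete (G : SimpleGraph V) (X Y : Set V) : Prop :=
  ∀ ⦃x⦄, x ∈ X → ∀ ⦃y⦄, y ∈ Y → ¬ G.Adj x y

/-- A *stable set* in `G` is a set of pairwise non-adjacent vertices. -/
def StableSet (G : SimpleGraph V) (S : Set V) : Prop :=
  ∀ ⦃x⦄, x ∈ S → ∀ ⦃y⦄, y ∈ S → ¬ G.Adj x y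

/-- A walk `p` is a *path in `G`* in the sense of the paper: a path which is moreover
an induced subgraph of `G` (no repeated vertices, and every edge of `G` between two
vertices of `p` is an edge of `p`). -/
def IsInducedPath (G : SimpleGraph V) {x y : V} (p : G.Walk x y) : Prop :=
  p.IsPath ∧ ∀ u v, u ∈ p.support → v ∈ p.support → G.Adj u v → s(u, v) ∈ p.edges

/-- The vertex set of a walk. -/
def walkVerts (G : SimpleGraph V) {x y : V} (p : G.Walk x y) : Set V :=
  {v | v ∈ p.support}

/-- The *interior* of a path with ends `x` and `y`: all of its vertices other than
its ends. -/
def walkInterior (G : SimpleGraph V) {x y : V} (p : G.Walk x y) : Set V :=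
  {v | v ∈ p.support} \ {x, y}

/-- `(W, Λ)` is a *web* in `G`: `Λ` assigns to each (ordered, for convenience of
formalization) pair of distinct vertices of `W` a path in `G` between them, the paths
assigned to `(x, y)` and `(y, x)` being reverses of one another (so that `Λ` really
is defined on 2-subsets of `W`), and the paths assigned to distinct 2-subsets
`{x, y}` and `{x', y'}` meet exactly in `{x, y} ∩ {x', y'}`. -/
structure IsWeb (G : SimpleGraph V) (W : Finset V)
    (Λ : ∀ x y : V, x ∈ W → y ∈ W → x ≠ y → G.Walk x y) : Prop where
  path : ∀ x y (hx : x ∈ W) (hy : y ∈ W) (hxy : x ≠ y), IsInducedPath G (Λ x y hx hy hxy)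
  symm : ∀ x y (hx : x ∈ W) (hy : y ∈ W) (hxy : x ≠ y),
    Λ y x hy hx hxy.symm = (Λ x y hx hy hxy).reverse
  inter : ∀ x y x' y' (hx : x ∈ W) (hy : y ∈ W) (hx' : x' ∈ W) (hy' : y' ∈ W)
      (hxy : x ≠ y) (hxy' : x' ≠ y'), ({x, y} : Set V) ≠ {x', y'} →
      walkVerts G (Λ x y hx hy hxy) ∩ walkVerts G (Λ x' y' hx' hy' hxy') =
        ({x, y} : Set V) ∩ {x', y'}

/-!
Ramsey's theorem for `4`-sets, applied to the colouring that records which slots of a `4`-tuple of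
branch vertices (the vertices themselves and the vertices of the paths joining them) are inner
vertices of their paths and which pairs of slots are adjacent, yields a long sequence of branch
vertices along which this information depends only on the relative order of the indices involved.
If two slots whose index sets are not nested are adjacent, moving the private indices of the one
and of the other independently, through disjoint blocks of the sequence, produces two families of
`N` distinct vertices with every vertex of the first adjacent to every vertex of the second;
Ramsey's theorem for graphs inside each family then gives `K_t` or `K_{t,t}`. Otherwise any `s`
branch vertices of the sequence satisfy (b).
-/

universe u

def IsHomogeneous {β : Type u} {κ : Type*} (f : Finset β → κ) (k : ℕ) (T : Finset β) : Prop :=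
  ∃ c, ∀ A ⊆ T, A.card = k → f A = c

/-- Remove the least element `a`, apply the `k`-uniform statement to the colouring
`A ↦ f (insert a A)` of the rest, and recurse inside the homogeneous set obtained. -/
theorem exists_minHomogeneous_subset (k : ℕ) (κ : Type*)
    (ih : ∀ M : ℕ, ∃ N : ℕ, ∀ {β : Type u} [LinearOrder β] (f : Finset β → κ) (S : Finset β),
      N ≤ S.card → ∃ T ⊆ S, M ≤ T.card ∧ IsHomogeneous f k T) (L : ℕ) :
    ∃ N : ℕ, ∀ {β : Type u} [LinearOrder β] (f : Finset β → κ) (S : Finset β), N ≤ S.card →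
      ∃ T ⊆ S, T.card = L ∧ ∃ c : β → κ,
        ∀ A ⊆ T, A.card = k + 1 → ∀ hA : A.Nonempty, f A = c (A.min' hA) := by
  induction L with
  | zero =>
    refine ⟨0, fun f S _ => ⟨∅, S.empty_subset, rfl, fun _ => f ∅, fun A hA _ hne => ?_⟩⟩
    exact absurd (Finset.subset_empty.mp hA) hne.ne_empty
  | succ L ihL =>
    obtain ⟨NL, hNL⟩ := ihL
    obtain ⟨N, hN⟩ := ih NL
    refine ⟨N + 1, fun {β} _ f S hS => ?_⟩
    have hSne : S.Nonempty := Finset.card_pos.mp (by omega)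
    set a := S.min' hSne
    have haS : a ∈ S := S.min'_mem hSne
    obtain ⟨T₀, hT₀S, hT₀card, c₀, hc₀⟩ := hN (fun A => f (insert a A)) (S.erase a)
      (by rw [Finset.card_erase_of_mem haS]; omega)
    obtain ⟨T, hTT₀, hTcard, c, hc⟩ := hNL f T₀ hT₀card
    have hTS : T ⊆ S.erase a := hTT₀.trans hT₀S
    have haT : a ∉ T := fun h => Finset.notMem_erase a S (hTS h)
    refine ⟨insert a T, Finset.insert_subset haS (hTS.trans (S.erase_subset a)),
      by rw [Finset.card_insert_of_notMem haT, hTcard], Function.update c a c₀,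
      fun A hA hAcard hAne => ?_⟩
    by_cases haA : a ∈ A
    · have hmin : A.min' hAne = a := le_antisymm (A.min'_le a haA)
        (Finset.le_min' _ _ _ fun y hy => S.min'_le y
          (Finset.insert_subset haS (hTS.trans (S.erase_subset a)) (hA hy)))
      have hAer : A.erase a ⊆ T₀ := fun x hx =>
        hTT₀ ((Finset.mem_insert.mp (hA (Finset.mem_of_mem_erase hx))).resolve_left
          (Finset.ne_of_mem_erase hx))
      have : f (insert a (A.erase a)) = c₀ :=
        hc₀ _ hAer (by rw [Finset.card_erase_of_mem haA, hAcard]; rfl)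
      rw [Finset.insert_erase haA] at this
      rw [hmin, this, Function.update_self]
    · have hAT : A ⊆ T := fun x hx =>
        (Finset.mem_insert.mp (hA hx)).resolve_left (fun h => haA (h ▸ hx))
      have hne : A.min' hAne ≠ a := fun h => haA (h ▸ A.min'_mem hAne)
      rw [hc A hAT hAcard hAne, Function.update_of_ne hne]

theorem exists_homogeneous_subset (k : ℕ) (κ : Type*) [Fintype κ] (M : ℕ) :
    ∃ N : ℕ, ∀ {β : Type u} [LinearOrder β] (f : Finset β → κ) (S : Finset β),
      N ≤ S.card → ∃ T ⊆ S, M ≤ T.card ∧ IsHomogeneous f k T := by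
  induction k generalizing M with
  | zero =>
    refine ⟨M, fun f S hS => ⟨S, subset_rfl, hS, f ∅, fun A _ hA => ?_⟩⟩
    rw [Finset.card_eq_zero.mp hA]
  | succ k ih =>
    classical
    obtain ⟨N, hN⟩ := exists_minHomogeneous_subset k κ ih (Fintype.card κ * M + 1)
    refine ⟨N, fun f S hS => ?_⟩
    obtain ⟨T, hTS, hTcard, c, hc⟩ := hN f S hS
    -- pigeonhole on the colours of the least elements
    obtain ⟨y, -, hy⟩ := Finset.exists_lt_card_fiber_of_mul_lt_card_of_maps_to
      (fun x _ => Finset.mem_univ (c x)) (s := T) (n := M - 1)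
      (by rw [hTcard, Finset.card_univ]; nlinarith [Nat.sub_le M 1])
    refine ⟨T.filter (fun x => c x = y), (Finset.filter_subset _ _).trans hTS, by omega, y,
      fun A hA hAcard => ?_⟩
    have hAne : A.Nonempty := Finset.card_pos.mp (by omega)
    rw [hc A (hA.trans (Finset.filter_subset _ _)) hAcard hAne]
    exact (Finset.mem_filter.mp (hA (A.min'_mem hAne))).2

theorem exists_homogeneous_orderEmbedding (k : ℕ) (κ : Type*) [Fintype κ] [Nonempty κ]
    (M : ℕ) : ∃ N : ℕ, ∀ n, N ≤ n → ∀ f : (Fin k ↪o Fin n) → κ,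
      ∃ e : Fin M ↪o Fin n, ∃ c, ∀ q : Fin k ↪o Fin M, f (q.trans e) = c := by
  classical
  obtain ⟨N, hN⟩ := exists_homogeneous_subset.{0} k κ M
  refine ⟨N, fun n hn f => ?_⟩
  obtain ⟨T, -, hTcard, c, hc⟩ := hN
    (fun A => if h : A.card = k then f (A.orderEmbOfFin h) else Classical.arbitrary κ)
    Finset.univ (by simpa using hn)
  set e := (Fin.castLEOrderEmb hTcard).trans (T.orderEmbOfFin rfl)
  refine ⟨e, c, fun q => ?_⟩
  set A := Finset.univ.map (q.trans e).toEmbedding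
  have hA : A.card = k := by simp [A]
  have hqA : ∀ i, (q.trans e) i ∈ A := fun i => Finset.mem_map_of_mem _ (Finset.mem_univ i)
  have hAT : A ⊆ T := fun x hx => by
    obtain ⟨i, -, rfl⟩ := Finset.mem_map.mp hx
    exact T.orderEmbOfFin_mem rfl _
  have : f (A.orderEmbOfFin hA) = c := by simpa [dif_pos hA] using hc A hAT hA
  rwa [← Finset.orderEmbOfFin_unique' hA hqA] at this

theorem exists_top_or_bot_embedding (t : ℕ) : ∃ N : ℕ, ∀ H : SimpleGraph (Fin N),
    Nonempty ((⊤ : SimpleGraph (Fin t)) ↪g H) ∨ Nonempty ((⊥ : SimpleGraph (Fin t)) ↪g H) := by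
  obtain ⟨N, hN⟩ := exists_homogeneous_orderEmbedding 2 Prop t
  refine ⟨N, fun H => ?_⟩
  obtain ⟨e, c, hc⟩ := hN N le_rfl fun q => H.Adj (q 0) (q 1)
  have hlt : ∀ i j, i < j → (H.Adj (e i) (e j) ↔ c) := fun i j hij =>
    (hc (OrderEmbedding.ofStrictMono ![i, j] (Fin.strictMono_iff_lt_succ.2 (by simpa)))).to_iff
  have hne : ∀ i j, i ≠ j → (H.Adj (e i) (e j) ↔ c) := fun i j hij =>
    hij.lt_or_gt.elim (hlt i j) fun h => (H.adj_comm _ _).trans (hlt j i h)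
  by_cases hc' : c
  · refine Or.inl ⟨⟨e.toEmbedding, fun {i j} => ?_⟩⟩
    by_cases hij : i = j
    · simp [hij]
    · simpa [hij, hc'] using hne i j hij
  · refine Or.inr ⟨⟨e.toEmbedding, fun {i j} => ?_⟩⟩
    by_cases hij : i = j
    · simp [hij]
    · simpa [hc'] using hne i j hij

theorem SimpleGraph.nonempty_completeBipartiteGraph_embedding {V α β : Type*}
    {G : SimpleGraph V} (f : (⊥ : SimpleGraph α) ↪g G) (g : (⊥ : SimpleGraph β) ↪g G)
    (hfg : ∀ a b, G.Adj (f a) (g b)) : Nonempty (completeBipartiteGraph α β ↪g G) := by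
  refine ⟨⟨⟨Sum.elim f g, ?_⟩, fun {x y} => ?_⟩⟩
  · rintro (a | b) (a' | b') h
    · exact congrArg Sum.inl (f.injective h)
    · exact absurd h (hfg a b').ne
    · exact absurd h.symm (hfg a' b).ne
    · exact congrArg Sum.inr (g.injective h)
  · rcases x with a | b <;> rcases y with a' | b'
    · change G.Adj (f a) (f a') ↔ _
      simp [f.map_rel_iff]
    · change G.Adj (f a) (g b') ↔ _
      simpa using hfg a b'
    · change G.Adj (g b) (f a') ↔ _
      simpa using (hfg a' b).symm
    · change G.Adj (g b) (g b') ↔ _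
      simp [g.map_rel_iff]

theorem exists_clique_or_biclique_of_forall_adj (t : ℕ) : ∃ N : ℕ, ∀ {V : Type}
    (G : SimpleGraph V) (X Y : Fin N ↪ V), (∀ k l, G.Adj (X k) (Y l)) →
      Nonempty ((⊤ : SimpleGraph (Fin t)) ↪g G) ∨
        Nonempty (completeBipartiteGraph (Fin t) (Fin t) ↪g G) := by
  obtain ⟨N, hN⟩ := exists_top_or_bot_embedding t
  refine ⟨N, fun G X Y hXY => ?_⟩
  obtain hX | hX := hN (G.comap X)
  · exact Or.inl (hX.map (·.trans (SimpleGraph.Embedding.comap X G)))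
  obtain hY | hY := hN (G.comap Y)
  · exact Or.inl (hY.map (·.trans (SimpleGraph.Embedding.comap Y G)))
  obtain ⟨φ⟩ := hX
  obtain ⟨ψ⟩ := hY
  exact Or.inr (SimpleGraph.nonempty_completeBipartiteGraph_embedding
    (φ.trans (SimpleGraph.Embedding.comap X G)) (ψ.trans (SimpleGraph.Embedding.comap Y G))
    fun k l => hXY _ _)

theorem Finset.exists_orderEmbedding_subset_range {α : Type*} [LinearOrder α] [Fintype α]
    (I : Finset α) {n : ℕ} (hI : I.card ≤ n) (hn : n ≤ Fintype.card α) :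
    ∃ q : Fin n ↪o α, ↑I ⊆ Set.range q := by
  obtain ⟨J, hIJ, -, hJ⟩ := Finset.exists_subsuperset_card_eq (Finset.subset_univ I) hI (by simpa)
  exact ⟨J.orderEmbOfFin hJ, by rw [Finset.range_orderEmbOfFin]; exact_mod_cast hIJ⟩

theorem Finset.pair_not_subset_pair_of_image_ne {α β : Type*} [DecidableEq α] {f : α → β}
    {i j k l : α} (hkl : k ≠ l) (hij : i ≠ j) (hne : ({f i, f j} : Set β) ≠ {f k, f l}) :
    ¬ ({i, j} : Finset α) ⊆ {k, l} := by
  intro hsub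
  have heq := Finset.eq_of_subset_of_card_le hsub
    (by rw [Finset.card_pair hij, Finset.card_pair hkl])
  apply hne
  simpa [Set.image_insert_eq] using congrArg (fun A : Finset α => f '' ↑A) heq

theorem SimpleGraph.Walk.IsPath.mem_walkInterior_iff {G : SimpleGraph V} {x y v : V}
    {p : G.Walk x y} (hp : p.IsPath) :
    v ∈ walkInterior G p ↔ ∃ n, 0 < n ∧ n < p.length ∧ p.getVert n = v := by
  simp only [walkInterior, Set.mem_sdiff, Set.mem_ofPred_eq, Set.mem_insert_iff,
    Set.mem_singleton_iff, not_or, SimpleGraph.Walk.mem_support_iff_exists_getVert]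
  constructor
  · rintro ⟨⟨n, rfl, hn⟩, hx, hy⟩
    refine ⟨n, Nat.pos_of_ne_zero fun h => hx ?_, lt_of_le_of_ne hn fun h => hy ?_, rfl⟩
    · rw [h, SimpleGraph.Walk.getVert_zero]
    · rw [h, SimpleGraph.Walk.getVert_length]
  · rintro ⟨n, hn0, hn, rfl⟩
    exact ⟨⟨n, rfl, hn.le⟩, fun h => hn0.ne' ((hp.getVert_eq_start_iff hn.le).mp h),
      fun h => hn.ne ((hp.getVert_eq_end_iff hn.le).mp h)⟩

section Web

variable {G : SimpleGraph V} {W : Finset V}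
  {Λ : ∀ x y : V, x ∈ W → y ∈ W → x ≠ y → G.Walk x y}

open Classical in
/-- Junk value `x` unless `x, y` are distinct vertices of `W`. -/
noncomputable def pairVtx (Λ : ∀ x y : V, x ∈ W → y ∈ W → x ≠ y → G.Walk x y) (x y : V)
    (n : ℕ) : V :=
  if h : x ∈ W ∧ y ∈ W ∧ x ≠ y then (Λ x y h.1 h.2.1 h.2.2).getVert n else x

open Classical in
/-- Junk value `0` unless `x, y` are distinct vertices of `W`. -/
noncomputable def pairLen (Λ : ∀ x y : V, x ∈ W → y ∈ W → x ≠ y → G.Walk x y) (x y : V) : ℕ :=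
  if h : x ∈ W ∧ y ∈ W ∧ x ≠ y then (Λ x y h.1 h.2.1 h.2.2).length else 0

theorem IsWeb.pairVtx_mem_walkInterior (hweb : IsWeb G W Λ) {x y : V} {n : ℕ} (hn : 0 < n)
    (hnl : n < pairLen Λ x y) : ∃ (hx : x ∈ W) (hy : y ∈ W) (hxy : x ≠ y),
      pairVtx Λ x y n ∈ walkInterior G (Λ x y hx hy hxy) := by
  by_cases h : x ∈ W ∧ y ∈ W ∧ x ≠ y
  · rw [pairLen, dif_pos h] at hnl
    refine ⟨h.1, h.2.1, h.2.2, ?_⟩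
    rw [pairVtx, dif_pos h]
    exact (hweb.path x y _ _ _).1.mem_walkInterior_iff.mpr ⟨n, hn, hnl, rfl⟩
  · rw [pairLen, dif_neg h] at hnl
    exact absurd hnl (Nat.not_lt_zero n)

theorem IsWeb.mem_walkInterior_iff (hweb : IsWeb G W Λ) {x y v : V} (hx : x ∈ W) (hy : y ∈ W)
    (hxy : x ≠ y) : v ∈ walkInterior G (Λ x y hx hy hxy) ↔
      ∃ n, 0 < n ∧ n < pairLen Λ x y ∧ pairVtx Λ x y n = v := by
  have h : x ∈ W ∧ y ∈ W ∧ x ≠ y := ⟨hx, hy, hxy⟩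
  simp only [pairLen, pairVtx, dif_pos h]
  exact (hweb.path x y hx hy hxy).1.mem_walkInterior_iff

theorem IsWeb.notMem_walkInterior (hweb : IsWeb G W Λ) {x y z : V} (hx : x ∈ W) (hy : y ∈ W)
    (hxy : x ≠ y) (hz : z ∈ W) : z ∉ walkInterior G (Λ x y hx hy hxy) := by
  rintro ⟨hzp, hzxy⟩
  have hzx : z ≠ x := fun h => hzxy (Or.inl h)
  have hne : ({z, x} : Set V) ≠ {x, y} := fun h => hzxy (h ▸ Set.mem_insert z {x})
  have hmem : z ∈ walkVerts G (Λ z x hz hx hzx) ∩ walkVerts G (Λ x y hx hy hxy) :=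
    ⟨SimpleGraph.Walk.start_mem_support _, hzp⟩
  rw [hweb.inter z x x y hz hx hx hy hzx hxy hne] at hmem
  exact hzxy hmem.2

theorem IsWeb.disjoint_walkInterior (hweb : IsWeb G W Λ) {x y x' y' : V} (hx : x ∈ W)
    (hy : y ∈ W) (hx' : x' ∈ W) (hy' : y' ∈ W) (hxy : x ≠ y) (hxy' : x' ≠ y')
    (hne : ({x, y} : Set V) ≠ {x', y'}) :
    Disjoint (walkInterior G (Λ x y hx hy hxy)) (walkInterior G (Λ x' y' hx' hy' hxy')) :=
  Set.disjoint_left.mpr fun v hv hv' => hv.2 <| by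
    have hmem : v ∈ walkVerts G (Λ x y hx hy hxy) ∩ walkVerts G (Λ x' y' hx' hy' hxy') :=
      ⟨hv.1, hv'.1⟩
    rw [hweb.inter x y x' y' hx hy hx' hy' hxy hxy' hne] at hmem
    exact hmem.1

end Web

/-- Inner vertices of paths of length at most `r + 1` have index at most `r`. -/
inductive Slot (n r : ℕ) where
  | vertex (i : Fin n)
  | inner (i j : Fin n) (a : Fin (r + 1))

namespace Slot

variable {n n' r : ℕ}

def equivSum : Slot n r ≃ Fin n ⊕ Fin n × Fin n × Fin (r + 1) where
  toFun
    | vertex i => .inl i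
    | inner i j a => .inr (i, j, a)
  invFun
    | .inl i => vertex i
    | .inr (i, j, a) => inner i j a
  left_inv := by rintro (_ | _) <;> rfl
  right_inv := by rintro (_ | ⟨_, _, _⟩) <;> rfl

instance : Fintype (Slot n r) := Fintype.ofEquiv _ equivSum.symm

instance : DecidableEq (Slot n r) := equivSum.decidableEq

def support : Slot n r → Finset (Fin n)
  | vertex i => {i}
  | inner i j _ => {i, j}

def map (f : Fin n → Fin n') : Slot n r → Slot n' r
  | vertex i => vertex (f i)
  | inner i j a => inner (f i) (f j) a

theorem support_map (f : Fin n → Fin n') (d : Slot n r) :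
    (d.map f).support = d.support.image f := by
  cases d <;> simp [support, map, Finset.image_insert]

theorem card_support_le (d : Slot n r) : d.support.card ≤ 2 := by
  cases d
  · simp [support]
  · exact Finset.card_le_two

theorem exists_map_eq {f : Fin n → Fin n'} {o : Slot n' r} (h : ↑o.support ⊆ Set.range f) :
    ∃ d : Slot n r, d.map f = o := by
  cases o with
  | vertex i =>
    obtain ⟨p, rfl⟩ := h (show i ∈ (vertex i : Slot n' r).support by simp [support])
    exact ⟨vertex p, rfl⟩
  | inner i j a =>
    obtain ⟨p, rfl⟩ := h (show i ∈ (inner i j a).support by simp [support])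
    obtain ⟨p', rfl⟩ := h (show j ∈ (inner (f p) j a).support by simp [support])
    exact ⟨inner p p' a, rfl⟩

variable {G : SimpleGraph V} {W : Finset V}

noncomputable def eval (Λ : ∀ x y : V, x ∈ W → y ∈ W → x ≠ y → G.Walk x y) (v : Fin n → V) :
    Slot n r → V
  | vertex i => v i
  | inner i j a => pairVtx Λ (v i) (v j) a

def IsValid (Λ : ∀ x y : V, x ∈ W → y ∈ W → x ≠ y → G.Walk x y) (v : Fin n → V) :
    Slot n r → Prop
  | vertex _ => True
  | inner i j a => 0 < (a : ℕ) ∧ (a : ℕ) < pairLen Λ (v i) (v j)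

variable {Λ : ∀ x y : V, x ∈ W → y ∈ W → x ≠ y → G.Walk x y}

theorem eval_map (f : Fin n → Fin n') (v : Fin n' → V) (d : Slot n r) :
    (d.map f).eval Λ v = d.eval Λ (v ∘ f) := by
  cases d <;> rfl

theorem isValid_map (f : Fin n → Fin n') (v : Fin n' → V) (d : Slot n r) :
    (d.map f).IsValid Λ v ↔ d.IsValid Λ (v ∘ f) := by
  cases d <;> rfl

theorem eval_congr {v w : Fin n → V} {d : Slot n r} (h : ∀ i ∈ d.support, v i = w i) :
    d.eval Λ v = d.eval Λ w := by
  cases d <;> simp_all [eval, support]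

theorem eval_ne_eval (hweb : IsWeb G W Λ) {v : Fin n → V} (hv : ∀ i, v i ∈ W)
    (hinj : Function.Injective v) {d e : Slot n r} (hd : d.IsValid Λ v) (he : e.IsValid Λ v)
    (h : d.support ≠ e.support) : d.eval Λ v ≠ e.eval Λ v := by
  have vertex_ne : ∀ i j k (a : Fin (r + 1)), (inner j k a).IsValid Λ v →
      (vertex i : Slot n r).eval Λ v ≠ (inner j k a).eval Λ v := by
    rintro i j k a ⟨ha, hal⟩ (heq : v i = pairVtx Λ (v j) (v k) a)
    obtain ⟨_, _, _, hmem⟩ := hweb.pairVtx_mem_walkInterior ha hal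
    exact hweb.notMem_walkInterior _ _ _ (hv i) (heq ▸ hmem)
  cases d with
  | vertex i =>
    cases e with
    | vertex j => exact hinj.ne fun hij => h (by rw [hij])
    | inner j k a => exact vertex_ne i j k a he
  | inner i j a =>
    cases e with
    | vertex k => exact (vertex_ne k i j a hd).symm
    | inner k l b =>
      obtain ⟨_, _, _, hmem⟩ := hweb.pairVtx_mem_walkInterior hd.1 hd.2
      obtain ⟨_, _, _, hmem'⟩ := hweb.pairVtx_mem_walkInterior he.1 he.2
      refine (hweb.disjoint_walkInterior _ _ _ _ _ _ fun hset => h ?_).ne_of_mem hmem hmem'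
      rcases Set.pair_eq_pair_iff.mp hset with ⟨hik, hjl⟩ | ⟨hil, hjk⟩
      · simp [support, hinj hik, hinj hjl]
      · simp [support, hinj hil, hinj hjk, Finset.pair_comm]

end Slot

section Indiscernible

variable {G : SimpleGraph V} {W : Finset V} {Λ : ∀ x y : V, x ∈ W → y ∈ W → x ≠ y → G.Walk x y}
  {r M : ℕ}

variable (r) in
def slotType (Λ : ∀ x y : V, x ∈ W → y ∈ W → x ≠ y → G.Walk x y) (v : Fin 4 → V) :
    (Slot 4 r → Prop) × (Slot 4 r → Slot 4 r → Prop) :=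
  (fun d => d.IsValid Λ v, fun d e => G.Adj (d.eval Λ v) (e.eval Λ v))

variable (r) in
def IsIndiscernible (Λ : ∀ x y : V, x ∈ W → y ∈ W → x ≠ y → G.Walk x y) (m : Fin M → V) :
    Prop :=
  ∀ q q' : Fin 4 ↪o Fin M, slotType r Λ (m ∘ q) = slotType r Λ (m ∘ q')

namespace IsIndiscernible

variable {m : Fin M → V} (hind : IsIndiscernible r Λ m) (q q' : Fin 4 ↪o Fin M)
include hind

theorem isValid_iff (d : Slot 4 r) : d.IsValid Λ (m ∘ q) ↔ d.IsValid Λ (m ∘ q') :=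
  (congrFun (congrArg Prod.fst (hind q q')) d).to_iff

theorem adj_iff (d e : Slot 4 r) :
    G.Adj (d.eval Λ (m ∘ q)) (e.eval Λ (m ∘ q)) ↔ G.Adj (d.eval Λ (m ∘ q')) (e.eval Λ (m ∘ q')) :=
  (congrFun (congrFun (congrArg Prod.snd (hind q q')) d) e).to_iff

end IsIndiscernible

theorem exists_isIndiscernible (r M : ℕ) : ∃ N : ℕ, ∀ {V : Type} {G : SimpleGraph V}
    {W : Finset V} (Λ : ∀ x y : V, x ∈ W → y ∈ W → x ≠ y → G.Walk x y), N ≤ W.card →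
      ∃ m : Fin M → V, Function.Injective m ∧ (∀ i, m i ∈ W) ∧ IsIndiscernible r Λ m := by
  classical
  obtain ⟨N, hN⟩ := exists_homogeneous_orderEmbedding 4
    ((Slot 4 r → Prop) × (Slot 4 r → Slot 4 r → Prop)) M
  refine ⟨N, fun {V G W} Λ hW => ?_⟩
  set w : Fin W.card → V := fun i => W.equivFin.symm i
  obtain ⟨e, c, hc⟩ := hN W.card hW fun q => slotType r Λ (w ∘ q)
  refine ⟨w ∘ e, ?_, fun i => (W.equivFin.symm (e i)).2, fun q q' => (hc q).trans (hc q').symm⟩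
  exact Subtype.val_injective.comp (W.equivFin.symm.injective.comp e.injective)

end Indiscernible

section Blocks

variable {N M : ℕ}

def blockOffset (P P' : Finset (Fin 4)) (k l : ℕ) (p : Fin 4) : ℕ :=
  if p ∈ P \ P' then k + 1 else if p ∈ P' \ P then l + 1 else 0

theorem blockOffset_lt {P P' : Finset (Fin 4)} {k l : ℕ} (hk : k < N) (hl : l < N) (p : Fin 4) :
    blockOffset P P' k l p < N + 1 := by
  unfold blockOffset
  split_ifs <;> omega

theorem mul_add_lt_mul_add {c p p' o o' : ℕ} (ho : o < c) (hpp' : p < p') :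
    c * p + o < c * p' + o' := by
  nlinarith

def blockEmb (hM : 4 * (N + 1) ≤ M) (P P' : Finset (Fin 4)) (k l : Fin N) : Fin 4 ↪o Fin M :=
  OrderEmbedding.ofStrictMono
    (fun p => ⟨(N + 1) * p + blockOffset P P' k l p, by
      have := mul_add_lt_mul_add (o' := 0) (blockOffset_lt (P := P) (P' := P') k.2 l.2 p) p.2
      omega⟩)
    fun _ _ hpp' => mul_add_lt_mul_add (blockOffset_lt k.2 l.2 _) hpp'

variable {hM : 4 * (N + 1) ≤ M} {P P' : Finset (Fin 4)}

theorem blockEmb_val (k l : Fin N) (p : Fin 4) :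
    (blockEmb hM P P' k l p : ℕ) = (N + 1) * p + blockOffset P P' k l p :=
  rfl

theorem eq_of_blockEmb_eq {k l k' l' : Fin N} {p p' : Fin 4}
    (h : blockEmb hM P P' k l p = blockEmb hM P P' k' l' p') : p = p' := by
  have h' := congrArg Fin.val h
  rw [blockEmb_val, blockEmb_val] at h'
  by_contra hne
  rcases Fin.lt_or_lt_of_ne hne with hlt | hlt
  · exact (mul_add_lt_mul_add (blockOffset_lt k.2 l.2 p) hlt).ne h'
  · exact (mul_add_lt_mul_add (blockOffset_lt k'.2 l'.2 p') hlt).ne h'.symm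

theorem blockEmb_apply_of_mem_left {p : Fin 4} (hp : p ∈ P) (k l l' : Fin N) :
    blockEmb hM P P' k l p = blockEmb hM P P' k l' p :=
  Fin.ext (by simp [blockEmb_val, blockOffset, hp])

theorem blockEmb_swap_apply_of_mem_right {p : Fin 4} (hp : p ∈ P') (k l : Fin N) :
    blockEmb hM P' P l l p = blockEmb hM P P' k l p :=
  Fin.ext (by simp [blockEmb_val, blockOffset, hp])

end Blocks

section Escape

variable {G : SimpleGraph V} {W : Finset V} {Λ : ∀ x y : V, x ∈ W → y ∈ W → x ≠ y → G.Walk x y}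
  {r N M : ℕ} {m : Fin M → V}

theorem injective_eval_blockEmb (hweb : IsWeb G W Λ) (hm : Function.Injective m)
    (hmW : ∀ i, m i ∈ W) (hM : 4 * (N + 1) ≤ M) {d : Slot 4 r} {P' : Finset (Fin 4)}
    (hdP' : ¬ d.support ⊆ P') (hd : ∀ q : Fin 4 ↪o Fin M, d.IsValid Λ (m ∘ q)) :
    Function.Injective fun k : Fin N => d.eval Λ (m ∘ blockEmb hM d.support P' k k) := by
  intro k k' hkk'
  obtain ⟨p, hp, hpP'⟩ := Finset.not_subset.mp hdP'
  by_contra hne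
  refine Slot.eval_ne_eval hweb hmW hm (d := d.map (blockEmb hM d.support P' k k))
    (e := d.map (blockEmb hM d.support P' k' k')) ((Slot.isValid_map _ _ _).2 (hd _))
    ((Slot.isValid_map _ _ _).2 (hd _)) ?_ (by rwa [Slot.eval_map, Slot.eval_map])
  rw [Slot.support_map, Slot.support_map]
  intro h
  obtain ⟨p', -, heq⟩ := Finset.mem_image.mp (h ▸ Finset.mem_image_of_mem _ hp)
  obtain rfl := eq_of_blockEmb_eq heq
  exact hne (Fin.ext (by
    simpa [blockEmb_val, blockOffset, hp, hpP'] using congrArg Fin.val heq.symm))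

/-- Move the private positions of `d` and those of `d'` independently, inside disjoint blocks. -/
theorem IsIndiscernible.exists_forall_adj_of_adj_comp (hind : IsIndiscernible r Λ m)
    (hweb : IsWeb G W Λ) (hm : Function.Injective m) (hmW : ∀ i, m i ∈ W)
    (hM : 4 * (N + 1) ≤ M) {d d' : Slot 4 r}
    (hdd' : ¬ d.support ⊆ d'.support) (hd'd : ¬ d'.support ⊆ d.support) (q : Fin 4 ↪o Fin M)
    (hd : d.IsValid Λ (m ∘ q)) (hd' : d'.IsValid Λ (m ∘ q))
    (hadj : G.Adj (d.eval Λ (m ∘ q)) (d'.eval Λ (m ∘ q))) :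
    ∃ X Y : Fin N ↪ V, ∀ k l, G.Adj (X k) (Y l) := by
  refine ⟨⟨_, injective_eval_blockEmb hweb hm hmW hM hdd' fun q' => (hind.isValid_iff q q' d).1 hd⟩,
    ⟨_, injective_eval_blockEmb hweb hm hmW hM hd'd fun q' => (hind.isValid_iff q q' d').1 hd'⟩,
    fun k l => ?_⟩
  have hX : d.eval Λ (m ∘ blockEmb hM d.support d'.support k k) =
      d.eval Λ (m ∘ blockEmb hM d.support d'.support k l) :=
    Slot.eval_congr fun p hp => congrArg m (blockEmb_apply_of_mem_left hp k k l)
  have hY : d'.eval Λ (m ∘ blockEmb hM d'.support d.support l l) =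
      d'.eval Λ (m ∘ blockEmb hM d.support d'.support k l) :=
    Slot.eval_congr fun p hp => congrArg m (blockEmb_swap_apply_of_mem_right hp k l)
  simp only [Function.Embedding.coeFn_mk, hX, hY]
  exact (hind.adj_iff q _ d d').1 hadj

theorem IsIndiscernible.exists_forall_adj_of_adj (hind : IsIndiscernible r Λ m)
    (hweb : IsWeb G W Λ) (hm : Function.Injective m) (hmW : ∀ i, m i ∈ W)
    (hM : 4 * (N + 1) ≤ M) {o o' : Slot M r}
    (hoo' : ¬ o.support ⊆ o'.support) (ho'o : ¬ o'.support ⊆ o.support)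
    (ho : o.IsValid Λ m) (ho' : o'.IsValid Λ m) (hadj : G.Adj (o.eval Λ m) (o'.eval Λ m)) :
    ∃ X Y : Fin N ↪ V, ∀ k l, G.Adj (X k) (Y l) := by
  obtain ⟨q, hq⟩ := Finset.exists_orderEmbedding_subset_range (n := 4) (o.support ∪ o'.support)
    ((Finset.card_union_le _ _).trans (by linarith [o.card_support_le, o'.card_support_le]))
    (by simp only [Fintype.card_fin]; omega)
  obtain ⟨d, rfl⟩ := Slot.exists_map_eq ((Finset.coe_subset.2 Finset.subset_union_left).trans hq)
  obtain ⟨d', rfl⟩ := Slot.exists_map_eq ((Finset.coe_subset.2 Finset.subset_union_right).trans hq)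
  rw [Slot.support_map, Slot.support_map, Finset.image_subset_image_iff q.injective] at hoo' ho'o
  rw [Slot.isValid_map] at ho ho'
  rw [Slot.eval_map, Slot.eval_map] at hadj
  exact hind.exists_forall_adj_of_adj_comp hweb hm hmW hM hoo' ho'o q ho ho' hadj

end Escape

section StableSubset

variable {G : SimpleGraph V} {W : Finset V} {Λ : ∀ x y : V, x ∈ W → y ∈ W → x ≠ y → G.Walk x y}
  {r M : ℕ} {m : Fin M → V}

theorem IsWeb.exists_inner_eval_eq (hweb : IsWeb G W Λ)
    (hr : ∀ x y (hx : x ∈ W) (hy : y ∈ W) (hxy : x ≠ y), (Λ x y hx hy hxy).length ≤ r + 1)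
    {i j : Fin M} {v : V} (hi : m i ∈ W) (hj : m j ∈ W) (hij : m i ≠ m j)
    (hv : v ∈ walkInterior G (Λ (m i) (m j) hi hj hij)) :
    ∃ a : Fin (r + 1), (Slot.inner i j a).IsValid Λ m ∧ (Slot.inner i j a).eval Λ m = v := by
  obtain ⟨n, hn0, hnl, rfl⟩ := (hweb.mem_walkInterior_iff hi hj hij).1 hv
  have hlen : pairLen Λ (m i) (m j) ≤ r + 1 := by
    rw [pairLen, dif_pos ⟨hi, hj, hij⟩]
    exact hr _ _ _ _ _
  exact ⟨⟨n, by omega⟩, ⟨hn0, hnl⟩, rfl⟩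

variable [DecidableEq V] (hweb : IsWeb G W Λ)
  (hsep : ∀ o o' : Slot M r, ¬ o.support ⊆ o'.support → ¬ o'.support ⊆ o.support →
    o.IsValid Λ m → o'.IsValid Λ m → ¬ G.Adj (o.eval Λ m) (o'.eval Λ m))
include hsep

theorem stableSet_image (I : Finset (Fin M)) : StableSet G ↑(I.image m) := by
  intro x hx y hy hadj
  obtain ⟨i, -, rfl⟩ := Finset.mem_image.mp hx
  obtain ⟨j, -, rfl⟩ := Finset.mem_image.mp hy
  have hij : i ≠ j := by
    rintro rfl
    exact G.irrefl hadj
  exact hsep (.vertex i) (.vertex j) (by simpa [Slot.support])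
    (by simpa [Slot.support] using hij.symm) trivial trivial hadj

include hweb

theorem anticomplete_vertex_walkInterior
    (hr : ∀ x y (hx : x ∈ W) (hy : y ∈ W) (hxy : x ≠ y), (Λ x y hx hy hxy).length ≤ r + 1)
    (I : Finset (Fin M)) :
    ∀ x ∈ I.image m, ∀ y ∈ I.image m, ∀ z ∈ I.image m, x ≠ y → x ≠ z →
      ∀ (hy : y ∈ W) (hz : z ∈ W) (hyz : y ≠ z),
        Anticomplete G {x} (walkInterior G (Λ y z hy hz hyz)) := by
  intro x hx y hy z hz hxy hxz hyW hzW hyz x' hx' v hv hadj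
  obtain rfl := Set.mem_singleton_iff.mp hx'
  obtain ⟨i, -, rfl⟩ := Finset.mem_image.mp hx
  obtain ⟨j, -, rfl⟩ := Finset.mem_image.mp hy
  obtain ⟨k, -, rfl⟩ := Finset.mem_image.mp hz
  obtain ⟨a, ha, rfl⟩ := hweb.exists_inner_eval_eq hr hyW hzW hyz hv
  have hij : i ≠ j := fun h => hxy (by rw [h])
  have hik : i ≠ k := fun h => hxz (by rw [h])
  have hjk : j ≠ k := fun h => hyz (by rw [h])
  refine hsep (.vertex i) (.inner j k a) ?_ ?_ trivial ha hadj
  · simp [Slot.support, hij, hik]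
  · exact fun h => hij (Finset.mem_singleton.mp (h (Finset.mem_insert_self j {k}))).symm

theorem anticomplete_walkInterior_walkInterior
    (hr : ∀ x y (hx : x ∈ W) (hy : y ∈ W) (hxy : x ≠ y), (Λ x y hx hy hxy).length ≤ r + 1)
    (I : Finset (Fin M)) :
    ∀ x ∈ I.image m, ∀ y ∈ I.image m, ∀ x' ∈ I.image m, ∀ y' ∈ I.image m,
      ∀ (hx : x ∈ W) (hy : y ∈ W) (hx' : x' ∈ W) (hy' : y' ∈ W)
        (hxy : x ≠ y) (hxy' : x' ≠ y'), ({x, y} : Set V) ≠ {x', y'} →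
        Anticomplete G (walkInterior G (Λ x y hx hy hxy))
          (walkInterior G (Λ x' y' hx' hy' hxy')) := by
  intro x hx y hy x' hx' y' hy' hxW hyW hx'W hy'W hxy hxy' hne v hv v' hv' hadj
  obtain ⟨i, -, rfl⟩ := Finset.mem_image.mp hx
  obtain ⟨j, -, rfl⟩ := Finset.mem_image.mp hy
  obtain ⟨k, -, rfl⟩ := Finset.mem_image.mp hx'
  obtain ⟨l, -, rfl⟩ := Finset.mem_image.mp hy'
  obtain ⟨a, ha, rfl⟩ := hweb.exists_inner_eval_eq hr hxW hyW hxy hv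
  obtain ⟨b, hb, rfl⟩ := hweb.exists_inner_eval_eq hr hx'W hy'W hxy' hv'
  have hij : i ≠ j := fun h => hxy (by rw [h])
  have hkl : k ≠ l := fun h => hxy' (by rw [h])
  exact hsep (.inner i j a) (.inner k l b) (Finset.pair_not_subset_pair_of_image_ne hkl hij hne)
    (Finset.pair_not_subset_pair_of_image_ne hij hkl (Ne.symm hne)) ha hb hadj

end StableSubset

theorem statement_0_general (r s t : ℕ) :
    ∃ Ω : ℕ, 0 < Ω ∧
      ∀ (V : Type) [Fintype V] [DecidableEq V] (G : SimpleGraph V) (W : Finset V)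
        (Λ : ∀ x y : V, x ∈ W → y ∈ W → x ≠ y → G.Walk x y),
        IsWeb G W Λ → W.card = Ω →
        (∀ x y (hx : x ∈ W) (hy : y ∈ W) (hxy : x ≠ y), (Λ x y hx hy hxy).length ≤ r + 1) →
        (Nonempty ((⊤ : SimpleGraph (Fin t)) ↪g G) ∨
          Nonempty (completeBipartiteGraph (Fin t) (Fin t) ↪g G)) ∨
        ∃ S : Finset V, S ⊆ W ∧ S.card = s ∧
          StableSet G ↑S ∧
          (∀ x ∈ S, ∀ y ∈ S, ∀ z ∈ S, x ≠ y → x ≠ z →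
            ∀ (hy : y ∈ W) (hz : z ∈ W) (hyz : y ≠ z),
              Anticomplete G {x} (walkInterior G (Λ y z hy hz hyz))) ∧
          (∀ x ∈ S, ∀ y ∈ S, ∀ x' ∈ S, ∀ y' ∈ S,
            ∀ (hx : x ∈ W) (hy : y ∈ W) (hx' : x' ∈ W) (hy' : y' ∈ W)
              (hxy : x ≠ y) (hxy' : x' ≠ y'), ({x, y} : Set V) ≠ {x', y'} →
              Anticomplete G (walkInterior G (Λ x y hx hy hxy))
                (walkInterior G (Λ x' y' hx' hy' hxy'))) := by
  obtain ⟨N, hN⟩ := exists_clique_or_biclique_of_forall_adj t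
  obtain ⟨Ω, hΩ⟩ := exists_isIndiscernible r (4 * (N + 1) + s)
  refine ⟨Ω + 1, Nat.succ_pos Ω, fun V _ _ G W Λ hweb hcard hr => ?_⟩
  obtain ⟨m, hm, hmW, hind⟩ := hΩ Λ (by omega)
  refine or_iff_not_imp_left.2 fun hfree => ?_
  have hsep : ∀ o o' : Slot (4 * (N + 1) + s) r, ¬ o.support ⊆ o'.support →
      ¬ o'.support ⊆ o.support → o.IsValid Λ m → o'.IsValid Λ m →
        ¬ G.Adj (o.eval Λ m) (o'.eval Λ m) := fun o o' hoo' ho'o ho ho' hadj =>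
    let ⟨X, Y, hXY⟩ := hind.exists_forall_adj_of_adj hweb hm hmW (by omega) hoo' ho'o ho ho' hadj
    hfree (hN G X Y hXY)
  obtain ⟨I, -, hI⟩ := Finset.exists_subset_card_eq
    (s := (Finset.univ : Finset (Fin (4 * (N + 1) + s)))) (n := s) (by simp)
  refine ⟨I.image m, fun x hx => ?_, by rw [Finset.card_image_of_injective I hm, hI],
    stableSet_image hsep I, anticomplete_vertex_walkInterior hweb hsep hr I,
    anticomplete_walkInterior_walkInterior hweb hsep hr I⟩
  obtain ⟨i, -, rfl⟩ := Finset.mem_image.mp hx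
  exact hmW i

/-- **Theorem 1.3 (main theorem).** For all `r ∈ ℕ ∪ {0}` and `s, t ∈ ℕ⁺` there is
`Ω = Ω(r,s,t) ∈ ℕ⁺` such that for every graph `G` and every `(r, Ω)`-web `(W, Λ)` in `G`,
either `G` contains `K_t` or `K_{t,t}` as an induced subgraph, or there is an `s`-subset
`S ⊆ W` which is stable, with every `x ∈ S` anticomplete to the interior `Λ*_{y,z}` for all
three vertices `x, y, z ∈ S`, and with the interiors `Λ*_{x,y}`, `Λ*_{x',y'}` anticomplete
for all distinct 2-subsets `{x,y}, {x',y'}` of `S`. -/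
theorem statement_0 (r s t : ℕ) (hs : 0 < s) (ht : 0 < t) :
    ∃ Ω : ℕ, 0 < Ω ∧
      ∀ (V : Type) [Fintype V] [DecidableEq V] (G : SimpleGraph V) (W : Finset V)
        (Λ : ∀ x y : V, x ∈ W → y ∈ W → x ≠ y → G.Walk x y),
        IsWeb G W Λ → W.card = Ω →
        (∀ x y (hx : x ∈ W) (hy : y ∈ W) (hxy : x ≠ y), (Λ x y hx hy hxy).length ≤ r + 1) →
        (Nonempty ((⊤ : SimpleGraph (Fin t)) ↪g G) ∨
          Nonempty (completeBipartiteGraph (Fin t) (Fin t) ↪g G)) ∨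
        ∃ S : Finset V, S ⊆ W ∧ S.card = s ∧
          StableSet G ↑S ∧
          (∀ x ∈ S, ∀ y ∈ S, ∀ z ∈ S, x ≠ y → x ≠ z →
            ∀ (hy : y ∈ W) (hz : z ∈ W) (hyz : y ≠ z),
              Anticomplete G {x} (walkInterior G (Λ y z hy hz hyz))) ∧
          (∀ x ∈ S, ∀ y ∈ S, ∀ x' ∈ S, ∀ y' ∈ S,
            ∀ (hx : x ∈ W) (hy : y ∈ W) (hx' : x' ∈ W) (hy' : y' ∈ W)
              (hxy : x ≠ y) (hxy' : x' ≠ y'), ({x, y} : Set V) ≠ {x', y'} →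
              Anticomplete G (walkInterior G (Λ x y hx hy hxy))
                (walkInterior G (Λ x' y' hx' hy' hxy'))) :=
  statement_0_general r s t
end

section
/- For all a, b, c, s ∈ ℕ⁺, there exists θ = θ(a,b,c,s) ∈ ℕ⁺ with the following property. Let G be a graph and let (W,Λ) be a θ-web in G. Then one of the following holds: (a) there exist A ⊆ W with |A| = a and a collection 𝓑 of pairwise disjoint 2-subsets of W \ A with |𝓑| = b such that for every x ∈ A and every {y,z} ∈ 𝓑, x has a neighbor in Λ_{y,z}; or (b) there exist disjoint subsets 𝓒 and 𝓒' of the set of 2-subsets of W, with |𝓒| = |𝓒'| = c, such that for every {x,y} ∈ 𝓒 and every {x',y'} ∈ 𝓒', the sets Λ*_{x,y} and Λ*_{x',y'} are not anticomplete in G; or (c) there exists S ⊆ W with |S| = s such that S is a stable set in G, for all three vertices x, y, z ∈ S the vertex x is anticomplete to Λ*_{y,z}, and for all distinct 2-subsets {x,y}, {x',y'} of S the sets Λ*_{x,y} and Λ*_{x',y'} are anticomplete in G. -/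
/-!
Common definitions: anticomplete sets, stable sets, induced paths,
and webs, following the paper's terminology.
-/

variable {V : Type} {α : Type}

/-!
Colour each 4-subset of an enumeration of `W` by which attachments (`x` has a neighbour in
`Λ_{y,z}`) and which touchings (`Λ*_{x,y}` and `Λ*_{x',y'}` not anticomplete) occur among its
elements. Ramsey's theorem gives a long sequence `u₀, u₁, …` in `W` on which both relations depend
only on the relative order of the indices. If `x` attaches to `Λ_{y,z}` for one position of `x`
relative to `y < z`, spreading the indices into blocks gives (a); if the interiors touch for one of
the six order types of two distinct pairs, interleaving blocks of pairs gives (b); otherwise the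
first `s` terms satisfy (c), the stability because an edge `u_p u_q` would make `u_p` attach to
`Λ_{u_q, u_s}`.
-/

open Finset

section Ramsey

variable {C β : Type}

def IsHomogeneousFor (f : Finset β → C) (r : ℕ) (M : Finset β) : Prop :=
  ∀ A ⊆ M, ∀ B ⊆ M, #A = r → #B = r → f A = f B

def RamseyBound (C : Type) (r n N : ℕ) : Prop :=
  ∀ {β : Type} [LinearOrder β] (f : Finset β → C) (T : Finset β), N ≤ #T →
    ∃ M ⊆ T, #M = n ∧ IsHomogeneousFor f r M

theorem exists_endHomogeneous {r : ℕ} (ih : ∀ n, ∃ N, RamseyBound C r n N) (m : ℕ) :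
    ∃ N, ∀ {β : Type} [LinearOrder β] (f : Finset β → C) (T : Finset β), N ≤ #T →
      ∃ P ⊆ T, #P = m ∧ ∃ c : β → C, ∀ A ⊆ P, #A = r + 1 →
        ∀ x ∈ A, (∀ y ∈ A, x ≤ y) → f A = c x := by
  induction m with
  | zero =>
    refine ⟨0, fun f T _ => ⟨∅, empty_subset T, card_empty, fun _ => f ∅, fun A hA hAr => ?_⟩⟩
    simp [subset_empty.1 hA] at hAr
  | succ m ihm =>
    obtain ⟨Nm, hNm⟩ := ihm
    obtain ⟨R, hR⟩ := ih (Nm + r)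
    refine ⟨R + 1, fun f T hT => ?_⟩
    have hT₀ : T.Nonempty := card_pos.1 (by omega)
    set a := T.min' hT₀
    have haT : a ∈ T := T.min'_mem hT₀
    obtain ⟨M, hMT, hM, hMhom⟩ := hR (fun B => f (insert a B)) (T.erase a)
      (by rw [card_erase_of_mem haT]; omega)
    obtain ⟨B₀, hB₀M, hB₀⟩ := exists_subset_card_eq (s := M) (n := r) (by omega)
    obtain ⟨P, hPM, hP, c, hc⟩ := hNm f M (by omega)
    have haP : a ∉ P := fun h => notMem_erase a T (hMT (hPM h))
    refine ⟨insert a P, insert_subset haT ((hPM.trans hMT).trans (erase_subset a T)),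
      by rw [card_insert_of_notMem haP, hP], Function.update c a (f (insert a B₀)),
      fun A hA hAr x hx hmin => ?_⟩
    by_cases hxa : x = a
    · rw [hxa] at hx ⊢
      have hAa : A.erase a ⊆ M := fun y hy =>
        hPM ((mem_insert.1 (hA (mem_of_mem_erase hy))).resolve_left (ne_of_mem_erase hy))
      have := hMhom _ hAa _ hB₀M (by rw [card_erase_of_mem hx, hAr]; rfl) hB₀
      simpa [insert_erase hx] using this
    · have haA : a ∉ A := fun haA => hxa (le_antisymm (hmin a haA)
        (T.min'_le x (mem_of_mem_erase (hMT (hPM ((mem_insert.1 (hA hx)).resolve_left hxa))))))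
      rw [Function.update_of_ne hxa]
      exact hc A (fun y hy => (mem_insert.1 (hA hy)).resolve_left (by rintro rfl; exact haA hy))
        hAr x hx hmin

theorem exists_ramseyBound [Fintype C] (r n : ℕ) : ∃ N, RamseyBound C r n N := by
  induction r generalizing n with
  | zero =>
    refine ⟨n, fun f T hT => ?_⟩
    obtain ⟨M, hMT, hM⟩ := exists_subset_card_eq hT
    exact ⟨M, hMT, hM, fun A _ B _ hA hB => by rw [card_eq_zero.1 hA, card_eq_zero.1 hB]⟩
  | succ r ih =>
    classical
    obtain ⟨N, hN⟩ := exists_endHomogeneous ih (Fintype.card C * n)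
    refine ⟨N, fun f T hT => ?_⟩
    obtain ⟨P, hPT, hP, c, hc⟩ := hN f T hT
    obtain ⟨w, -, hw⟩ := exists_le_card_fiber_of_mul_le_card_of_maps_to
      (f := c) (s := P) (t := univ) (fun x _ => mem_univ (c x)) ⟨f ∅, mem_univ _⟩
      (by rw [hP, card_univ])
    obtain ⟨M, hMw, hM⟩ := exists_subset_card_eq hw
    have hMP : M ⊆ P := hMw.trans (filter_subset _ _)
    have hconst : ∀ A ⊆ M, #A = r + 1 → f A = w := fun A hA hAr => by
      have hA₀ : A.Nonempty := card_pos.1 (by omega)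
      rw [hc A (hA.trans hMP) hAr _ (A.min'_mem hA₀) (fun y hy => A.min'_le y hy)]
      exact (mem_filter.1 (hMw (hA (A.min'_mem hA₀)))).2
    exact ⟨M, hMP.trans hPT, hM, fun A hA B hB hAr hBr => by
      rw [hconst A hA hAr, hconst B hB hBr]⟩

theorem exists_orderEmbedding_homogeneous [Fintype C] (r m : ℕ) :
    ∃ N, ∀ {β : Type} [LinearOrder β] (T : Finset β), N ≤ #T → ∀ κ : (Fin r → β) → C,
      ∃ φ : Fin m ↪o β, (∀ i, φ i ∈ T) ∧ ∀ g g' : Fin r ↪o Fin m, κ (φ ∘ g) = κ (φ ∘ g') := by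
  obtain ⟨N, hN⟩ := exists_ramseyBound (C := Option C) r m
  refine ⟨N, fun T hT κ => ?_⟩
  classical
  obtain ⟨M, hMT, hM, hhom⟩ :=
    hN (fun A => if h : #A = r then some (κ (A.orderEmbOfFin h)) else none) T hT
  let φ := M.orderEmbOfFin hM
  have key : ∀ g : Fin r ↪o Fin m, ∃ A ⊆ M, ∃ h : #A = r, A.orderEmbOfFin h = φ ∘ g := by
    intro g
    have hA : #(univ.map (g.trans φ).toEmbedding) = r := by simp
    refine ⟨_, fun x hx => ?_, hA, ?_⟩
    · obtain ⟨i, -, rfl⟩ := mem_map.1 hx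
      exact M.orderEmbOfFin_mem hM _
    · exact (congrArg DFunLike.coe (orderEmbOfFin_unique' hA (f := g.trans φ)
        (fun i => mem_map_of_mem _ (mem_univ i)))).symm
  refine ⟨φ, fun i => hMT (M.orderEmbOfFin_mem hM i), fun g g' => ?_⟩
  obtain ⟨A, hAM, hA, hAg⟩ := key g
  obtain ⟨B, hBM, hB, hBg⟩ := key g'
  simpa only [dif_pos hA, dif_pos hB, hAg, hBg, Option.some.injEq] using hhom A hAM B hBM hA hB

end Ramsey

section OrderHomogeneous

variable {V : Type}

/-- Whether `R` holds of terms of `u` indexed from `p < q < r < t < m` depends only on the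
positions of the indices used, the quadruple `0 < 1 < 2 < 3` serving as reference. -/
def IsOrderHomogeneous₃ (R : V → V → V → Prop) (u : ℕ → V) (m : ℕ) : Prop :=
  ∀ p q r t, p < q → q < r → r < t → t < m → ∀ i j k : Fin 4,
    R (u (![p, q, r, t] i)) (u (![p, q, r, t] j)) (u (![p, q, r, t] k)) ↔ R (u i) (u j) (u k)

def IsOrderHomogeneous₄ (S : V → V → V → V → Prop) (u : ℕ → V) (m : ℕ) : Prop :=
  ∀ p q r t, p < q → q < r → r < t → t < m → ∀ i j k l : Fin 4,
    S (u (![p, q, r, t] i)) (u (![p, q, r, t] j)) (u (![p, q, r, t] k)) (u (![p, q, r, t] l)) ↔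
      S (u i) (u j) (u k) (u l)

theorem exists_orderEmbedding_quad {m p q r t : ℕ} (h₁ : p < q) (h₂ : q < r) (h₃ : r < t)
    (h₄ : t < m) : ∃ g : Fin 4 ↪o Fin m, ∀ i, (g i : ℕ) = ![p, q, r, t] i := by
  have hlt : ∀ i, ![p, q, r, t] i < m := by
    intro i; fin_cases i <;> simp <;> omega
  refine ⟨OrderEmbedding.ofStrictMono (fun i => ⟨_, hlt i⟩) ?_, fun i => rfl⟩
  refine Fin.strictMono_iff_lt_succ.2 fun i => ?_
  fin_cases i <;> simpa [Fin.lt_def]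

theorem exists_isOrderHomogeneous (m : ℕ) (hm : 0 < m) :
    ∃ N, ∀ {V : Type} (W : Finset V) (R : V → V → V → Prop) (S : V → V → V → V → Prop),
      N ≤ #W → ∃ u : ℕ → V, (∀ i < m, u i ∈ W) ∧ Set.InjOn u (Set.Iio m) ∧
        IsOrderHomogeneous₃ R u m ∧ IsOrderHomogeneous₄ S u m := by
  classical
  obtain ⟨N, hN⟩ := exists_orderEmbedding_homogeneous
    (C := (Fin 4 → Fin 4 → Fin 4 → Bool) × (Fin 4 → Fin 4 → Fin 4 → Fin 4 → Bool)) 4 m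
  refine ⟨N, fun {V} W R S hW => ?_⟩
  let e : Fin #W → V := fun x => W.equivFin.symm x
  obtain ⟨φ, -, hφ⟩ := hN (univ : Finset (Fin #W)) (by simpa using hW) fun x =>
    (fun i j k => decide (R (e (x i)) (e (x j)) (e (x k))),
      fun i j k l => decide (S (e (x i)) (e (x j)) (e (x k)) (e (x l))))
  let u : ℕ → V := fun k => if h : k < m then e (φ ⟨k, h⟩) else e (φ ⟨0, hm⟩)
  have hu : ∀ i : Fin m, u i = e (φ i) := fun i => dif_pos i.2
  have transfer : ∀ p q r t, p < q → q < r → r < t → t < m → ∃ g g₀ : Fin 4 ↪o Fin m,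
      (∀ i, u (![p, q, r, t] i) = e (φ (g i))) ∧ ∀ i : Fin 4, u i = e (φ (g₀ i)) := by
    intro p q r t h₁ h₂ h₃ h₄
    obtain ⟨g, hg⟩ := exists_orderEmbedding_quad h₁ h₂ h₃ h₄
    have h4m : 4 ≤ m := by omega
    exact ⟨g, Fin.castLEOrderEmb h4m, fun i => by rw [← hg, hu], fun i => hu (Fin.castLE h4m i)⟩
  refine ⟨u, fun i hi => by simp [u, hi, e], fun i hi j hj hij => ?_,
    fun p q r t h₁ h₂ h₃ h₄ i j k => ?_, fun p q r t h₁ h₂ h₃ h₄ i j k l => ?_⟩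
  · have h := (hu ⟨i, hi⟩).symm.trans (hij.trans (hu ⟨j, hj⟩))
    exact congrArg Fin.val (φ.injective (W.equivFin.symm.injective (Subtype.val_injective h)))
  · obtain ⟨g, g₀, hg, hg₀⟩ := transfer p q r t h₁ h₂ h₃ h₄
    simpa [hg, hg₀] using congrFun (congrFun (congrFun (congrArg Prod.fst (hφ g g₀)) i) j) k
  · obtain ⟨g, g₀, hg, hg₀⟩ := transfer p q r t h₁ h₂ h₃ h₄
    simpa [hg, hg₀] using
      congrFun (congrFun (congrFun (congrFun (congrArg Prod.snd (hφ g g₀)) i) j) k) l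

theorem IsOrderHomogeneous₃.not_rel {R : V → V → V → Prop} {u : ℕ → V} {m : ℕ}
    (hR : IsOrderHomogeneous₃ R u m) (hsymm : ∀ x y z, R x y z → R x z y)
    (h : ¬(R (u 0) (u 1) (u 2) ∨ R (u 1) (u 0) (u 2) ∨ R (u 2) (u 0) (u 1)))
    {p q r : ℕ} (hp : p + 1 < m) (hq : q + 1 < m) (hr : r + 1 < m)
    (hpq : p ≠ q) (hpr : p ≠ r) (hqr : q ≠ r) : ¬R (u p) (u q) (u r) := by
  wlog hqr' : q < r generalizing q r
  · exact fun hR' => this (q := r) (r := q) hr hq hpr hpq hqr.symm (by omega) (hsymm _ _ _ hR')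
  intro hR'
  rcases lt_or_gt_of_ne hpq with hpq' | hqp
  · exact h (Or.inl (by simpa using (hR p q r (m - 1) hpq' hqr' (by omega) (by omega) 0 1 2).1 hR'))
  rcases lt_or_gt_of_ne hpr with hpr' | hrp
  · exact h (Or.inr (Or.inl
      (by simpa using (hR q p r (m - 1) hqp hpr' (by omega) (by omega) 1 0 2).1 hR')))
  · exact h (Or.inr (Or.inr
      (by simpa using (hR q r p (m - 1) hqr' hrp (by omega) (by omega) 2 0 1).1 hR')))

/-- Up to swapping within and between the pairs, two distinct pairs of indices have one of the six
order types listed in `h`. -/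
theorem IsOrderHomogeneous₄.not_rel {S : V → V → V → V → Prop} {u : ℕ → V} {m : ℕ}
    (hS : IsOrderHomogeneous₄ S u m) (hswap : ∀ x y x' y', S x y x' y' → S y x x' y')
    (hcomm : ∀ x y x' y', S x y x' y' → S x' y' x y)
    (h : ¬(S (u 0) (u 1) (u 2) (u 3) ∨ S (u 0) (u 2) (u 1) (u 3) ∨ S (u 0) (u 3) (u 1) (u 2) ∨
      S (u 0) (u 1) (u 0) (u 2) ∨ S (u 0) (u 1) (u 1) (u 2) ∨ S (u 0) (u 2) (u 1) (u 2)))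
    {p q p' q' : ℕ} (hp : p + 1 < m) (hq : q + 1 < m) (hp' : p' + 1 < m) (hq' : q' + 1 < m)
    (hpq : p ≠ q) (hpq' : p' ≠ q') (hne : ¬(p = p' ∧ q = q' ∨ p = q' ∧ q = p')) :
    ¬S (u p) (u q) (u p') (u q') := by
  have hswap' : ∀ x y x' y', S x y x' y' → S x y y' x' := fun x y x' y' hS' =>
    hcomm _ _ _ _ (hswap _ _ _ _ (hcomm _ _ _ _ hS'))
  wlog hlt : p < q generalizing p q
  · exact fun hS' => this (p := q) (q := p) hq hp hpq.symm (by omega) (by omega) (hswap _ _ _ _ hS')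
  wlog hlt' : p' < q' generalizing p' q'
  · exact fun hS' => this (p' := q') (q' := p') hq' hp' hpq'.symm (by omega) (by omega)
      (hswap' _ _ _ _ hS')
  wlog hlex : p < p' ∨ p = p' ∧ q < q' generalizing p q p' q'
  · exact fun hS' => this hp' hq' hpq' hlt' hp hq hpq (by omega) hlt (by omega)
      (hcomm _ _ _ _ hS')
  intro hS'
  simp only [not_or] at h
  rcases hlex with hpp' | ⟨rfl, hqq'⟩
  · rcases lt_trichotomy q p' with hqp' | rfl | hp'q
    · exact h.1 (by simpa using (hS p q p' q' hlt hqp' hlt' (by omega) 0 1 2 3).1 hS')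
    · exact h.2.2.2.2.1
        (by simpa using (hS p q q' (m - 1) hlt hlt' (by omega) (by omega) 0 1 1 2).1 hS')
    rcases lt_trichotomy q q' with hqq' | rfl | hq'q
    · exact h.2.1 (by simpa using (hS p p' q q' hpp' hp'q hqq' (by omega) 0 2 1 3).1 hS')
    · exact h.2.2.2.2.2
        (by simpa using (hS p p' q (m - 1) hpp' hp'q (by omega) (by omega) 0 2 1 2).1 hS')
    · exact h.2.2.1 (by simpa using (hS p p' q' q hpp' hlt' hq'q (by omega) 0 3 1 2).1 hS')
  · exact h.2.2.2.1
      (by simpa using (hS p q q' (m - 1) hlt hqq' (by omega) (by omega) 0 1 0 2).1 hS')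

end OrderHomogeneous

section Web

variable {V : Type} (G : SimpleGraph V) (W : Finset V)
  (Λ : ∀ x y : V, x ∈ W → y ∈ W → x ≠ y → G.Walk x y)

theorem walkVerts_reverse {x y : V} (p : G.Walk x y) :
    walkVerts G p.reverse = walkVerts G p := by
  ext v; simp [walkVerts]

theorem walkInterior_reverse {x y : V} (p : G.Walk x y) :
    walkInterior G p.reverse = walkInterior G p := by
  ext v; simp [walkInterior, Set.pair_comm x y]

def AttachesTo (x y z : V) : Prop :=
  ∃ (hy : y ∈ W) (hz : z ∈ W) (hyz : y ≠ z), ∃ v ∈ walkVerts G (Λ y z hy hz hyz), G.Adj x v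

def InteriorsTouch (x y x' y' : V) : Prop :=
  ∃ (hx : x ∈ W) (hy : y ∈ W) (hxy : x ≠ y) (hx' : x' ∈ W) (hy' : y' ∈ W) (hxy' : x' ≠ y'),
    ¬Anticomplete G (walkInterior G (Λ x y hx hy hxy)) (walkInterior G (Λ x' y' hx' hy' hxy'))

variable [DecidableEq V]

def HasAttachedPairs (a b : ℕ) : Prop :=
  ∃ A : Finset V, A ⊆ W ∧ A.card = a ∧
    ∃ 𝓑 : Finset (Finset V), 𝓑.card = b ∧
      (∀ B ∈ 𝓑, B.card = 2 ∧ B ⊆ W \ A) ∧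
      (∀ B ∈ 𝓑, ∀ B' ∈ 𝓑, B ≠ B' → Disjoint B B') ∧
      (∀ x ∈ A, ∀ B ∈ 𝓑, ∀ y z (hy : y ∈ W) (hz : z ∈ W) (hyz : y ≠ z),
        B = {y, z} → ∃ v ∈ walkVerts G (Λ y z hy hz hyz), G.Adj x v)

def HasTouchingFamilies (c : ℕ) : Prop :=
  ∃ 𝓒 𝓒' : Finset (Finset V), Disjoint 𝓒 𝓒' ∧ 𝓒.card = c ∧ 𝓒'.card = c ∧
    (∀ C ∈ 𝓒 ∪ 𝓒', C.card = 2 ∧ C ⊆ W) ∧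
    (∀ C ∈ 𝓒, ∀ C' ∈ 𝓒',
      ∀ x y x' y' (hx : x ∈ W) (hy : y ∈ W) (hx' : x' ∈ W) (hy' : y' ∈ W)
        (hxy : x ≠ y) (hxy' : x' ≠ y'), C = {x, y} → C' = {x', y'} →
        ¬ Anticomplete G (walkInterior G (Λ x y hx hy hxy))
            (walkInterior G (Λ x' y' hx' hy' hxy')))

def HasCleanSubweb (s : ℕ) : Prop :=
  ∃ S : Finset V, S ⊆ W ∧ S.card = s ∧
    StableSet G ↑S ∧
    (∀ x ∈ S, ∀ y ∈ S, ∀ z ∈ S, x ≠ y → x ≠ z →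
      ∀ (hy : y ∈ W) (hz : z ∈ W) (hyz : y ≠ z),
        Anticomplete G {x} (walkInterior G (Λ y z hy hz hyz))) ∧
    (∀ x ∈ S, ∀ y ∈ S, ∀ x' ∈ S, ∀ y' ∈ S,
      ∀ (hx : x ∈ W) (hy : y ∈ W) (hx' : x' ∈ W) (hy' : y' ∈ W)
        (hxy : x ≠ y) (hxy' : x' ≠ y'), ({x, y} : Set V) ≠ {x', y'} →
        Anticomplete G (walkInterior G (Λ x y hx hy hxy))
          (walkInterior G (Λ x' y' hx' hy' hxy')))

end Web

section InjOn

variable {V β : Type} [DecidableEq V] {u : β → V} {s : Set β}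

theorem Set.InjOn.pair_eq_pair_iff (hinj : Set.InjOn u s) {i j i' j' : β} (hi : i ∈ s)
    (hj : j ∈ s) (hi' : i' ∈ s) (hj' : j' ∈ s) :
    ({u i, u j} : Finset V) = {u i', u j'} ↔ i = i' ∧ j = j' ∨ i = j' ∧ j = i' := by
  rw [← coe_inj, coe_pair, coe_pair, Set.pair_eq_pair_iff, hinj.eq_iff hi hi',
    hinj.eq_iff hj hj', hinj.eq_iff hi hj', hinj.eq_iff hj hi']

theorem Set.InjOn.disjoint_pair_iff (hinj : Set.InjOn u s) {i j i' j' : β} (hi : i ∈ s)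
    (hj : j ∈ s) (hi' : i' ∈ s) (hj' : j' ∈ s) :
    Disjoint ({u i, u j} : Finset V) {u i', u j'} ↔ i ≠ i' ∧ i ≠ j' ∧ j ≠ i' ∧ j ≠ j' := by
  simp only [Finset.disjoint_insert_left, Finset.disjoint_singleton_left, Finset.mem_insert,
    Finset.mem_singleton, hinj.eq_iff hi hi', hinj.eq_iff hj hj', hinj.eq_iff hi hj',
    hinj.eq_iff hj hi', not_or, and_assoc]

end InjOn

section WebLemmas

variable {V : Type} {G : SimpleGraph V} {W : Finset V}
  {Λ : ∀ x y : V, x ∈ W → y ∈ W → x ≠ y → G.Walk x y}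

theorem AttachesTo.swap (hweb : IsWeb G W Λ) {x y z : V} (h : AttachesTo G W Λ x y z) :
    AttachesTo G W Λ x z y := by
  obtain ⟨hy, hz, hyz, hv⟩ := h
  exact ⟨hz, hy, hyz.symm, by rwa [hweb.symm, walkVerts_reverse]⟩

theorem InteriorsTouch.swap (hweb : IsWeb G W Λ) {x y x' y' : V}
    (h : InteriorsTouch G W Λ x y x' y') : InteriorsTouch G W Λ y x x' y' := by
  obtain ⟨hx, hy, hxy, hx', hy', hxy', hT⟩ := h
  exact ⟨hy, hx, hxy.symm, hx', hy', hxy', by rwa [hweb.symm, walkInterior_reverse]⟩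

theorem InteriorsTouch.symm {x y x' y' : V} (h : InteriorsTouch G W Λ x y x' y') :
    InteriorsTouch G W Λ x' y' x y := by
  obtain ⟨hx, hy, hxy, hx', hy', hxy', hT⟩ := h
  exact ⟨hx', hy', hxy', hx, hy, hxy, fun hA => hT fun a ha b hb hab => hA hb ha hab.symm⟩

end WebLemmas

section WebSequence

variable {V : Type} [DecidableEq V] {G : SimpleGraph V} {W : Finset V}
  {Λ : ∀ x y : V, x ∈ W → y ∈ W → x ≠ y → G.Walk x y} {u : ℕ → V} {m : ℕ}

theorem AttachesTo.of_pair_eq (hweb : IsWeb G W Λ) {x y z y' z' : V}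
    (h : AttachesTo G W Λ x y z) (e : ({y, z} : Finset V) = {y', z'}) :
    AttachesTo G W Λ x y' z' := by
  rw [← coe_inj, coe_pair, coe_pair, Set.pair_eq_pair_iff] at e
  rcases e with ⟨rfl, rfl⟩ | ⟨rfl, rfl⟩
  exacts [h, h.swap hweb]

theorem InteriorsTouch.of_pair_eq (hweb : IsWeb G W Λ) {x y x' y' a b a' b' : V}
    (h : InteriorsTouch G W Λ x y x' y') (e : ({x, y} : Finset V) = {a, b})
    (e' : ({x', y'} : Finset V) = {a', b'}) : InteriorsTouch G W Λ a b a' b' := by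
  rw [← coe_inj, coe_pair, coe_pair, Set.pair_eq_pair_iff] at e e'
  have h' : InteriorsTouch G W Λ a b x' y' := by
    rcases e with ⟨rfl, rfl⟩ | ⟨rfl, rfl⟩
    exacts [h, h.swap hweb]
  rcases e' with ⟨rfl, rfl⟩ | ⟨rfl, rfl⟩
  exacts [h', (h'.symm.swap hweb).symm]

theorem card_image_pair (hinj : Set.InjOn u (Set.Iio m)) {c : ℕ} {p q : ℕ → ℕ}
    (hlt : ∀ t < c, p t < q t ∧ q t < m)
    (hpq : ∀ t < c, ∀ t' < c, p t = p t' → q t = q t' → t = t') :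
    #((range c).image fun t => ({u (p t), u (q t)} : Finset V)) = c := by
  rw [card_image_of_injOn, card_range]
  intro t ht t' ht' htt'
  simp only [coe_range, Set.mem_Iio] at ht ht'
  have := hlt t ht; have := hlt t' ht'
  rw [hinj.pair_eq_pair_iff (by simp; omega) (by simp; omega) (by simp; omega)
    (by simp; omega)] at htt'
  exact hpq t ht t' ht' (by omega) (by omega)

/-- The indices are laid out in blocks `X₀ < Y < X₁ < Z < X₂` with `|Xₖ| = a` and `|Y| = |Z| = b`;
the pairs are `{Y_t, Z_t}`, and the offset `o` selects the block `Xₖ` carrying `A`, which realises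
each of the three positions of `x` relative to `y < z`. -/
theorem hasAttachedPairs_of_blocks (hweb : IsWeb G W Λ) (hmem : ∀ i < m, u i ∈ W)
    (hinj : Set.InjOn u (Set.Iio m)) {a b o : ℕ} (ho : o = 0 ∨ o = a + b ∨ o = 2 * a + 2 * b)
    (hm : 3 * a + 2 * b ≤ m)
    (h : ∀ i < a, ∀ t < b, AttachesTo G W Λ (u (o + i)) (u (a + t)) (u (2 * a + b + t))) :
    HasAttachedPairs G W Λ a b := by
  have hu : ∀ {i j}, i < m → j < m → (u i = u j ↔ i = j) := fun hi hj => hinj.eq_iff hi hj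
  refine ⟨(range a).image fun i => u (o + i), ?_, ?_,
    (range b).image fun t => {u (a + t), u (2 * a + b + t)}, ?_, ?_, ?_, ?_⟩
  · simp only [image_subset_iff, mem_range]
    exact fun i hi => hmem _ (by omega)
  · rw [card_image_of_injOn, card_range]
    intro i hi j hj hij
    simp only [coe_range, Set.mem_Iio] at hi hj
    have := (hu (by omega) (by omega)).1 hij
    omega
  · exact card_image_pair hinj (p := (a + ·)) (q := (2 * a + b + ·)) (fun _ _ => by omega)
      fun _ _ _ _ => by omega
  · intro B hB
    obtain ⟨t, ht, rfl⟩ := mem_image.1 hB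
    rw [mem_range] at ht
    refine ⟨card_pair ((hu (by omega) (by omega)).not.2 (by omega)), fun x hx => ?_⟩
    rw [mem_insert, mem_singleton] at hx
    rw [mem_sdiff, mem_image]
    rcases hx with rfl | rfl <;> refine ⟨hmem _ (by omega), ?_⟩ <;>
      rintro ⟨i, hi, hxi⟩ <;> rw [mem_range] at hi <;> rw [hu (by omega) (by omega)] at hxi <;>
      omega
  · intro B hB B' hB' hne
    obtain ⟨t, ht, rfl⟩ := mem_image.1 hB
    obtain ⟨t', ht', rfl⟩ := mem_image.1 hB'
    rw [mem_range] at ht ht'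
    have htt' : t ≠ t' := by rintro rfl; exact hne rfl
    rw [hinj.disjoint_pair_iff (by simp; omega) (by simp; omega) (by simp; omega)
      (by simp; omega)]
    omega
  · intro x hx B hB y z hy hz hyz hB'
    obtain ⟨i, hi, rfl⟩ := mem_image.1 hx
    obtain ⟨t, ht, rfl⟩ := mem_image.1 hB
    rw [mem_range] at hi ht
    exact ((h i hi t ht).of_pair_eq hweb hB').2.2.2

theorem hasTouchingFamilies_of_pairs (hweb : IsWeb G W Λ) (hmem : ∀ i < m, u i ∈ W)
    (hinj : Set.InjOn u (Set.Iio m)) {c : ℕ} (p q p' q' : ℕ → ℕ)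
    (hlt : ∀ t < c, p t < q t ∧ q t < m) (hlt' : ∀ t < c, p' t < q' t ∧ q' t < m)
    (hinjp : ∀ t < c, ∀ t' < c, p t = p t' → q t = q t' → t = t')
    (hinjp' : ∀ t < c, ∀ t' < c, p' t = p' t' → q' t = q' t' → t = t')
    (hne : ∀ t < c, ∀ t' < c, p t = p' t' → q t ≠ q' t')
    (h : ∀ t < c, ∀ t' < c, InteriorsTouch G W Λ (u (p t)) (u (q t)) (u (p' t')) (u (q' t'))) :
    HasTouchingFamilies G W Λ c := by
  refine ⟨(range c).image fun t => {u (p t), u (q t)},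
    (range c).image fun t => {u (p' t), u (q' t)}, ?_, ?_, ?_, ?_, ?_⟩
  · refine disjoint_left.2 fun C hC hC' => ?_
    obtain ⟨t, ht, rfl⟩ := mem_image.1 hC
    obtain ⟨t', ht', htt'⟩ := mem_image.1 hC'
    rw [mem_range] at ht ht'
    have := hlt t ht; have := hlt' t' ht'; have := hne t ht t' ht'
    rw [hinj.pair_eq_pair_iff (by simp; omega) (by simp; omega) (by simp; omega)
      (by simp; omega)] at htt'
    omega
  · exact card_image_pair hinj hlt hinjp
  · exact card_image_pair hinj hlt' hinjp'
  · intro C hC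
    rw [mem_union, mem_image, mem_image] at hC
    obtain ⟨t, ht, rfl⟩ | ⟨t, ht, rfl⟩ := hC <;> rw [mem_range] at ht <;>
      [have := hlt t ht; have := hlt' t ht] <;>
      exact ⟨card_pair ((hinj.eq_iff (by simp; omega) (by simp; omega)).not.2 (by omega)),
        insert_subset (hmem _ (by omega)) (singleton_subset_iff.2 (hmem _ (by omega)))⟩
  · intro C hC C' hC' x y x' y' hx hy hx' hy' hxy hxy' e e'
    obtain ⟨t, ht, rfl⟩ := mem_image.1 hC
    obtain ⟨t', ht', rfl⟩ := mem_image.1 hC'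
    rw [mem_range] at ht ht'
    exact ((h t ht t' ht').of_pair_eq hweb e e').2.2.2.2.2.2

theorem hasCleanSubweb_of_forall_not (hmem : ∀ i < m, u i ∈ W) (hinj : Set.InjOn u (Set.Iio m))
    {s : ℕ} (hsm : s < m)
    (hatt : ∀ p ≤ s, ∀ q ≤ s, ∀ r ≤ s, p ≠ q → p ≠ r → q ≠ r →
      ¬AttachesTo G W Λ (u p) (u q) (u r))
    (htouch : ∀ p < s, ∀ q < s, ∀ p' < s, ∀ q' < s, p ≠ q → p' ≠ q' →
      ¬(p = p' ∧ q = q' ∨ p = q' ∧ q = p') → ¬InteriorsTouch G W Λ (u p) (u q) (u p') (u q')) :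
    HasCleanSubweb G W Λ s := by
  refine ⟨(range s).image u, ?_, ?_, ?_, ?_, ?_⟩
  · simp only [image_subset_iff, mem_range]
    exact fun i hi => hmem i (by omega)
  · rw [card_image_of_injOn (hinj.mono fun i hi => by simp at hi ⊢; omega), card_range]
  · intro x hx y hy hxy
    simp only [coe_image, coe_range, Set.mem_image, Set.mem_Iio] at hx hy
    obtain ⟨p, hp, rfl⟩ := hx
    obtain ⟨q, hq, rfl⟩ := hy
    have hpq : p ≠ q := by rintro rfl; exact G.loopless.irrefl _ hxy
    exact hatt p (by omega) q (by omega) s le_rfl hpq (by omega) (by omega)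
      ⟨hmem q (by omega), hmem s hsm, mt (hinj.eq_iff (by simp; omega) hsm).1 (by omega),
        u q, SimpleGraph.Walk.start_mem_support _, hxy⟩
  · intro x hx y hy z hz hxy hxz hyW hzW hyz x' hx' v hv hadj
    rw [Set.mem_singleton_iff.1 hx'] at hadj
    simp only [mem_image, mem_range] at hx hy hz
    obtain ⟨p, hp, rfl⟩ := hx
    obtain ⟨q, hq, rfl⟩ := hy
    obtain ⟨r, hr, rfl⟩ := hz
    exact hatt p (by omega) q (by omega) r (by omega) (by rintro rfl; exact hxy rfl)
      (by rintro rfl; exact hxz rfl) (by rintro rfl; exact hyz rfl) ⟨hyW, hzW, hyz, v, hv.1, hadj⟩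
  · intro x hx y hy x' hx' y' hy' hxW hyW hx'W hy'W hxy hxy' hne
    by_contra hA
    simp only [mem_image, mem_range] at hx hy hx' hy'
    obtain ⟨p, hp, rfl⟩ := hx
    obtain ⟨q, hq, rfl⟩ := hy
    obtain ⟨p', hp', rfl⟩ := hx'
    obtain ⟨q', hq', rfl⟩ := hy'
    refine htouch p hp q hq p' hp' q' hq' (by rintro rfl; exact hxy rfl)
      (by rintro rfl; exact hxy' rfl) ?_ ⟨hxW, hyW, hxy, hx'W, hy'W, hxy', hA⟩
    rintro (⟨rfl, rfl⟩ | ⟨rfl, rfl⟩)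
    exacts [hne rfl, hne (Set.pair_comm _ _)]

theorem hasAttachedPairs_of_pattern (hweb : IsWeb G W Λ) (hmem : ∀ i < m, u i ∈ W)
    (hinj : Set.InjOn u (Set.Iio m)) (h₃ : IsOrderHomogeneous₃ (AttachesTo G W Λ) u m)
    {a b : ℕ} (hm : 3 * a + 2 * b < m)
    (h : AttachesTo G W Λ (u 0) (u 1) (u 2) ∨ AttachesTo G W Λ (u 1) (u 0) (u 2) ∨
      AttachesTo G W Λ (u 2) (u 0) (u 1)) :
    HasAttachedPairs G W Λ a b := by
  rcases h with h | h | h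
  · refine hasAttachedPairs_of_blocks hweb hmem hinj (o := 0) (by omega) hm.le fun i hi t ht => ?_
    simpa using (h₃ i (a + t) (2 * a + b + t) (m - 1) (by omega) (by omega) (by omega) (by omega)
      0 1 2).2 h
  · refine hasAttachedPairs_of_blocks hweb hmem hinj (o := a + b) (by omega) hm.le
      fun i hi t ht => ?_
    simpa using (h₃ (a + t) (a + b + i) (2 * a + b + t) (m - 1) (by omega) (by omega) (by omega)
      (by omega) 1 0 2).2 h
  · refine hasAttachedPairs_of_blocks hweb hmem hinj (o := 2 * a + 2 * b) (by omega) hm.le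
      fun i hi t ht => ?_
    simpa using (h₃ (a + t) (2 * a + b + t) (2 * a + 2 * b + i) (m - 1) (by omega) (by omega)
      (by omega) (by omega) 2 0 1).2 h

theorem hasTouchingFamilies_of_pattern (hweb : IsWeb G W Λ) (hmem : ∀ i < m, u i ∈ W)
    (hinj : Set.InjOn u (Set.Iio m)) (h₄ : IsOrderHomogeneous₄ (InteriorsTouch G W Λ) u m)
    {c : ℕ} (hm : 4 * c < m)
    (h : InteriorsTouch G W Λ (u 0) (u 1) (u 2) (u 3) ∨
      InteriorsTouch G W Λ (u 0) (u 2) (u 1) (u 3) ∨ InteriorsTouch G W Λ (u 0) (u 3) (u 1) (u 2) ∨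
      InteriorsTouch G W Λ (u 0) (u 1) (u 0) (u 2) ∨ InteriorsTouch G W Λ (u 0) (u 1) (u 1) (u 2) ∨
      InteriorsTouch G W Λ (u 0) (u 2) (u 1) (u 2)) :
    HasTouchingFamilies G W Λ c := by
  rcases h with h | h | h | h | h | h
  · refine hasTouchingFamilies_of_pairs hweb hmem hinj
      (fun t => t) (fun t => c + t) (fun t => 2 * c + t) (fun t => 3 * c + t)
      (fun _ _ => by omega) (fun _ _ => by omega) (fun _ _ _ _ => by omega)
      (fun _ _ _ _ => by omega) (fun _ _ _ _ => by omega) fun t _ t' _ => ?_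
    simpa using (h₄ t (c + t) (2 * c + t') (3 * c + t') (by omega) (by omega) (by omega)
      (by omega) 0 1 2 3).2 h
  · refine hasTouchingFamilies_of_pairs hweb hmem hinj
      (fun t => t) (fun t => 2 * c + t) (fun t => c + t) (fun t => 3 * c + t)
      (fun _ _ => by omega) (fun _ _ => by omega) (fun _ _ _ _ => by omega)
      (fun _ _ _ _ => by omega) (fun _ _ _ _ => by omega) fun t _ t' _ => ?_
    simpa using (h₄ t (c + t') (2 * c + t) (3 * c + t') (by omega) (by omega) (by omega)
      (by omega) 0 2 1 3).2 h
  · refine hasTouchingFamilies_of_pairs hweb hmem hinj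
      (fun t => t) (fun t => 3 * c + t) (fun t => c + t) (fun t => 2 * c + t)
      (fun _ _ => by omega) (fun _ _ => by omega) (fun _ _ _ _ => by omega)
      (fun _ _ _ _ => by omega) (fun _ _ _ _ => by omega) fun t _ t' _ => ?_
    simpa using (h₄ t (c + t') (2 * c + t') (3 * c + t) (by omega) (by omega) (by omega)
      (by omega) 0 3 1 2).2 h
  · refine hasTouchingFamilies_of_pairs hweb hmem hinj
      (fun _ => 0) (fun t => 1 + t) (fun _ => 0) (fun t => 1 + c + t)
      (fun _ _ => by omega) (fun _ _ => by omega) (fun _ _ _ _ => by omega)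
      (fun _ _ _ _ => by omega) (fun _ _ _ _ => by omega) fun t _ t' _ => ?_
    simpa using (h₄ 0 (1 + t) (1 + c + t') (m - 1) (by omega) (by omega) (by omega)
      (by omega) 0 1 0 2).2 h
  · refine hasTouchingFamilies_of_pairs hweb hmem hinj
      (fun t => t) (fun _ => c) (fun _ => c) (fun t => c + 1 + t)
      (fun _ _ => by omega) (fun _ _ => by omega) (fun _ _ _ _ => by omega)
      (fun _ _ _ _ => by omega) (fun _ _ _ _ => by omega) fun t _ t' _ => ?_
    simpa using (h₄ t c (c + 1 + t') (m - 1) (by omega) (by omega) (by omega)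
      (by omega) 0 1 1 2).2 h
  · refine hasTouchingFamilies_of_pairs hweb hmem hinj
      (fun t => t) (fun _ => 2 * c) (fun t => c + t) (fun _ => 2 * c)
      (fun _ _ => by omega) (fun _ _ => by omega) (fun _ _ _ _ => by omega)
      (fun _ _ _ _ => by omega) (fun _ _ _ _ => by omega) fun t _ t' _ => ?_
    simpa using (h₄ t (c + t') (2 * c) (m - 1) (by omega) (by omega) (by omega)
      (by omega) 0 2 1 2).2 h

theorem trichotomy_of_isOrderHomogeneous (hweb : IsWeb G W Λ) (hmem : ∀ i < m, u i ∈ W)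
    (hinj : Set.InjOn u (Set.Iio m)) (h₃ : IsOrderHomogeneous₃ (AttachesTo G W Λ) u m)
    (h₄ : IsOrderHomogeneous₄ (InteriorsTouch G W Λ) u m) {a b c s : ℕ}
    (hm : 3 * a + 2 * b + 4 * c + s + 2 ≤ m) :
    HasAttachedPairs G W Λ a b ∨ HasTouchingFamilies G W Λ c ∨ HasCleanSubweb G W Λ s := by
  refine or_iff_not_imp_left.2 fun hA => or_iff_not_imp_left.2 fun hT => ?_
  have hA' := mt (hasAttachedPairs_of_pattern hweb hmem hinj h₃ (by omega)) hA
  have hT' := mt (hasTouchingFamilies_of_pattern hweb hmem hinj h₄ (by omega)) hT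
  exact hasCleanSubweb_of_forall_not hmem hinj (by omega)
    (fun p _ q _ r _ => h₃.not_rel (fun _ _ _ h => h.swap hweb) hA' (by omega) (by omega)
      (by omega))
    (fun p _ q _ p' _ q' _ => h₄.not_rel (fun _ _ _ _ h => h.swap hweb) (fun _ _ _ _ h => h.symm)
      hT' (by omega) (by omega) (by omega) (by omega))

end WebSequence

theorem statement_1_general (a b c s : ℕ) :
    ∃ θ : ℕ, 0 < θ ∧
      ∀ (V : Type) [Fintype V] [DecidableEq V] (G : SimpleGraph V) (W : Finset V)
        (Λ : ∀ x y : V, x ∈ W → y ∈ W → x ≠ y → G.Walk x y),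
        IsWeb G W Λ → W.card = θ →
        -- (a)
        (∃ A : Finset V, A ⊆ W ∧ A.card = a ∧
          ∃ 𝓑 : Finset (Finset V), 𝓑.card = b ∧
            (∀ B ∈ 𝓑, B.card = 2 ∧ B ⊆ W \ A) ∧
            (∀ B ∈ 𝓑, ∀ B' ∈ 𝓑, B ≠ B' → Disjoint B B') ∧
            (∀ x ∈ A, ∀ B ∈ 𝓑, ∀ y z (hy : y ∈ W) (hz : z ∈ W) (hyz : y ≠ z),
              B = {y, z} → ∃ v ∈ walkVerts G (Λ y z hy hz hyz), G.Adj x v)) ∨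
        -- (b)
        (∃ 𝓒 𝓒' : Finset (Finset V), Disjoint 𝓒 𝓒' ∧ 𝓒.card = c ∧ 𝓒'.card = c ∧
          (∀ C ∈ 𝓒 ∪ 𝓒', C.card = 2 ∧ C ⊆ W) ∧
          (∀ C ∈ 𝓒, ∀ C' ∈ 𝓒',
            ∀ x y x' y' (hx : x ∈ W) (hy : y ∈ W) (hx' : x' ∈ W) (hy' : y' ∈ W)
              (hxy : x ≠ y) (hxy' : x' ≠ y'), C = {x, y} → C' = {x', y'} →
              ¬ Anticomplete G (walkInterior G (Λ x y hx hy hxy))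
                  (walkInterior G (Λ x' y' hx' hy' hxy')))) ∨
        -- (c)
        (∃ S : Finset V, S ⊆ W ∧ S.card = s ∧
          StableSet G ↑S ∧
          (∀ x ∈ S, ∀ y ∈ S, ∀ z ∈ S, x ≠ y → x ≠ z →
            ∀ (hy : y ∈ W) (hz : z ∈ W) (hyz : y ≠ z),
              Anticomplete G {x} (walkInterior G (Λ y z hy hz hyz))) ∧
          (∀ x ∈ S, ∀ y ∈ S, ∀ x' ∈ S, ∀ y' ∈ S,
            ∀ (hx : x ∈ W) (hy : y ∈ W) (hx' : x' ∈ W) (hy' : y' ∈ W)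
              (hxy : x ≠ y) (hxy' : x' ≠ y'), ({x, y} : Set V) ≠ {x', y'} →
              Anticomplete G (walkInterior G (Λ x y hx hy hxy))
                (walkInterior G (Λ x' y' hx' hy' hxy')))) := by
  obtain ⟨N, hN⟩ := exists_isOrderHomogeneous (3 * a + 2 * b + 4 * c + s + 2) (by omega)
  refine ⟨N + 1, N.succ_pos, fun V _ _ G W Λ hweb hW => ?_⟩
  obtain ⟨u, hmem, hinj, h₃, h₄⟩ := hN W (AttachesTo G W Λ) (InteriorsTouch G W Λ) (by omega)
  exact trichotomy_of_isOrderHomogeneous hweb hmem hinj h₃ h₄ le_rfl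

/-- **Theorem 2.4.** For all `a, b, c, s ∈ ℕ⁺` there is `θ = θ(a,b,c,s) ∈ ℕ⁺` such that
for every graph `G` and every `θ`-web `(W, Λ)` in `G`, one of the following holds:
(a) there are `A ⊆ W` with `|A| = a` and a collection `𝓑` of `b` pairwise disjoint
2-subsets of `W \ A` such that every `x ∈ A` has a neighbor in `Λ_{y,z}` for every
`{y,z} ∈ 𝓑`; (b) there are disjoint collections `𝓒, 𝓒'` of 2-subsets of `W`, each of
size `c`, such that `Λ*_{x,y}` and `Λ*_{x',y'}` are not anticomplete for every
`{x,y} ∈ 𝓒` and `{x',y'} ∈ 𝓒'`; (c) there is an `s`-subset `S ⊆ W` which is stable,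
with every `x ∈ S` anticomplete to `Λ*_{y,z}` for all three vertices `x, y, z ∈ S`, and
with `Λ*_{x,y}`, `Λ*_{x',y'}` anticomplete for all distinct 2-subsets `{x,y}, {x',y'}`
of `S`. -/
theorem statement_1 (a b c s : ℕ) (ha : 0 < a) (hb : 0 < b) (hc : 0 < c) (hs : 0 < s) :
    ∃ θ : ℕ, 0 < θ ∧
      ∀ (V : Type) [Fintype V] [DecidableEq V] (G : SimpleGraph V) (W : Finset V)
        (Λ : ∀ x y : V, x ∈ W → y ∈ W → x ≠ y → G.Walk x y),
        IsWeb G W Λ → W.card = θ →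
        -- (a)
        (∃ A : Finset V, A ⊆ W ∧ A.card = a ∧
          ∃ 𝓑 : Finset (Finset V), 𝓑.card = b ∧
            (∀ B ∈ 𝓑, B.card = 2 ∧ B ⊆ W \ A) ∧
            (∀ B ∈ 𝓑, ∀ B' ∈ 𝓑, B ≠ B' → Disjoint B B') ∧
            (∀ x ∈ A, ∀ B ∈ 𝓑, ∀ y z (hy : y ∈ W) (hz : z ∈ W) (hyz : y ≠ z),
              B = {y, z} → ∃ v ∈ walkVerts G (Λ y z hy hz hyz), G.Adj x v)) ∨
        -- (b)
        (∃ 𝓒 𝓒' : Finset (Finset V), Disjoint 𝓒 𝓒' ∧ 𝓒.card = c ∧ 𝓒'.card = c ∧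
          (∀ C ∈ 𝓒 ∪ 𝓒', C.card = 2 ∧ C ⊆ W) ∧
          (∀ C ∈ 𝓒, ∀ C' ∈ 𝓒',
            ∀ x y x' y' (hx : x ∈ W) (hy : y ∈ W) (hx' : x' ∈ W) (hy' : y' ∈ W)
              (hxy : x ≠ y) (hxy' : x' ≠ y'), C = {x, y} → C' = {x', y'} →
              ¬ Anticomplete G (walkInterior G (Λ x y hx hy hxy))
                  (walkInterior G (Λ x' y' hx' hy' hxy')))) ∨
        -- (c)
        (∃ S : Finset V, S ⊆ W ∧ S.card = s ∧
          StableSet G ↑S ∧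
          (∀ x ∈ S, ∀ y ∈ S, ∀ z ∈ S, x ≠ y → x ≠ z →
            ∀ (hy : y ∈ W) (hz : z ∈ W) (hyz : y ≠ z),
              Anticomplete G {x} (walkInterior G (Λ y z hy hz hyz))) ∧
          (∀ x ∈ S, ∀ y ∈ S, ∀ x' ∈ S, ∀ y' ∈ S,
            ∀ (hx : x ∈ W) (hy : y ∈ W) (hx' : x' ∈ W) (hy' : y' ∈ W)
              (hxy : x ≠ y) (hxy' : x' ≠ y'), ({x, y} : Set V) ≠ {x', y'} →
              Anticomplete G (walkInterior G (Λ x y hx hy hxy))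
                (walkInterior G (Λ x' y' hx' hy' hxy')))) :=
  statement_1_general a b c s
end

section
/- For all a, b, s ∈ ℕ⁺, there exists τ = τ(a,b,s) ∈ ℕ⁺ with the following property. Let G be a graph and let (W,Λ) be a τ-web in G. Then one of the following holds: (a) there exist A ⊆ W with |A| = a and a collection 𝓑 of pairwise disjoint 2-subsets of W \ A with |𝓑| = b such that for every x ∈ A and every {y,z} ∈ 𝓑, x has a neighbor in Λ_{y,z}; or (b) there exists S ⊆ W with |S| = s such that S is a stable set in G and for all three vertices x, y, z ∈ S the vertex x is anticomplete to Λ*_{y,z}. -/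
/-!
Common definitions: anticomplete sets, stable sets, induced paths,
and webs, following the paper's terminology.
-/

variable {V : Type} {α : Type}

/-!
Colour each triple `x < y < z` of `W` (for an arbitrary linear order) by recording which of its
three vertices has a neighbour on the web path joining the other two. Ramsey's theorem for
3-uniform hypergraphs yields a large homogeneous set `H ⊆ W`. If in `H` the vertex in some fixed
relative position (first, middle or last) always sees the path of the other two, then putting `A`
at that position relative to `b` disjoint pairs gives (a). Otherwise no vertex of `H` sees the path
between two others; since a path contains its ends, `H` is moreover stable, which gives (b).
-/

universe u v

open Finset

def IsRamseyBound (κ : Type v) (r n N : ℕ) : Prop :=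
  ∀ (α : Type u) (c : Finset α → κ) (T : Finset α), N ≤ #T →
    ∃ S ⊆ T, n ≤ #S ∧ ∃ i, ∀ e ⊆ S, #e = r → c e = i

theorem exists_minHomogeneous {κ : Type v} {r : ℕ} (hr : ∀ n, ∃ N, IsRamseyBound.{u} κ r n N)
    (m : ℕ) :
    ∃ N, ∀ (α : Type u) [LinearOrder α] (c : Finset α → κ) (T : Finset α), N ≤ #T →
      ∃ S ⊆ T, m ≤ #S ∧ ∃ d : α → κ,
        ∀ e ⊆ S, #e = r + 1 → ∀ x, IsLeast (e : Set α) x → c e = d x := by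
  induction m with
  | zero => exact ⟨0, fun α _ c T _ => ⟨∅, empty_subset _, le_rfl, fun _ => c ∅, by simp⟩⟩
  | succ m ih =>
    obtain ⟨N, hN⟩ := ih
    obtain ⟨R, hR⟩ := hr N
    refine ⟨R + 1, fun α _ c T hT => ?_⟩
    classical
    have hTne : T.Nonempty := card_pos.mp (by omega)
    set v := T.min' hTne
    obtain ⟨A, hAT, hA, i, hi⟩ := hR α (fun e => c (insert v e)) (T.erase v)
      (by rw [card_erase_of_mem (min'_mem T hTne)]; omega)
    obtain ⟨S, hSA, hS, d, hd⟩ := hN α c A hA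
    have hST : S ⊆ T := hSA.trans (hAT.trans (erase_subset v T))
    have hvS : v ∉ S := fun h => notMem_erase v T (hAT (hSA h))
    refine ⟨insert v S, insert_subset (min'_mem T hTne) hST,
      by rw [card_insert_of_notMem hvS]; omega, Function.update d v i, ?_⟩
    intro e heS he x hx
    by_cases hxv : x = v
    · rw [hxv] at hx
      have hev : e.erase v ⊆ A := fun y hy =>
        hSA (by simpa [(mem_erase.mp hy).1] using heS (mem_of_mem_erase hy))
      rw [hxv, Function.update_self, ← hi _ hev (by rw [card_erase_of_mem hx.1]; omega),
        insert_erase hx.1]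
    · have hxS : x ∈ S := by simpa [hxv] using heS hx.1
      have hve : v ∉ e := fun hv => hxv (le_antisymm (hx.2 hv) (min'_le T x (hST hxS)))
      have heS' : e ⊆ S := fun y hy => by simpa [ne_of_mem_of_not_mem hy hve] using heS hy
      rw [Function.update_of_ne hxv, hd e heS' he x hx]

theorem exists_isRamseyBound (κ : Type v) [Fintype κ] (r n : ℕ) :
    ∃ N, IsRamseyBound.{u} κ r n N := by
  induction r generalizing n with
  | zero =>
    exact ⟨n, fun α c T hT => ⟨T, subset_rfl, hT, c ∅, fun e _ he => by rw [card_eq_zero.mp he]⟩⟩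
  | succ r ih =>
    obtain ⟨N, hN⟩ := exists_minHomogeneous ih (Fintype.card κ * n)
    refine ⟨N, fun α c T hT => ?_⟩
    classical
    let _ : LinearOrder α := WellOrderingRel.isWellOrder.linearOrder
    obtain ⟨S, hST, hS, d, hd⟩ := hN α c T hT
    have : Nonempty κ := ⟨c ∅⟩
    obtain ⟨i, -, hi⟩ := exists_le_card_fiber_of_mul_le_card_of_maps_to (s := S) (t := univ)
      (f := d) (fun _ _ => mem_univ _) univ_nonempty (by simpa using hS)
    refine ⟨{x ∈ S | d x = i}, (filter_subset _ S).trans hST, hi, i, fun e he hcard => ?_⟩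
    have hne : e.Nonempty := card_pos.mp (by omega)
    rw [hd e (he.trans (filter_subset _ S)) hcard _ (isLeast_min' e hne)]
    exact (mem_filter.mp (he (min'_mem e hne))).2

section Seeing

-- `P x y z` reads: the vertex `x` sees the pair `{y, z}`.
variable (P : V → V → V → Prop)

def IsBlindSet (S : Finset V) : Prop :=
  ∀ x ∈ S, ∀ y ∈ S, ∀ z ∈ S, x ≠ y → x ≠ z → y ≠ z → ¬ P x y z

variable [DecidableEq V]

def SeesMatching (W : Finset V) (a b : ℕ) : Prop :=
  ∃ A ⊆ W, #A = a ∧ ∃ 𝓑 : Finset (Finset V), #𝓑 = b ∧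
    (∀ B ∈ 𝓑, #B = 2 ∧ B ⊆ W \ A) ∧
    (∀ B ∈ 𝓑, ∀ B' ∈ 𝓑, B ≠ B' → Disjoint B B') ∧
    (∀ x ∈ A, ∀ B ∈ 𝓑, ∀ y z, B = {y, z} → P x y z)

variable {P}

theorem SeesMatching.mono {W W' : Finset V} {a b : ℕ} (h : SeesMatching P W a b) (hW : W ⊆ W') :
    SeesMatching P W' a b := by
  obtain ⟨A, hAW, hA, 𝓑, h𝓑, h𝓑W, h𝓑disj, hsee⟩ := h
  exact ⟨A, hAW.trans hW, hA, 𝓑, h𝓑, fun B hB => ⟨(h𝓑W B hB).1,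
    (h𝓑W B hB).2.trans (sdiff_subset_sdiff hW subset_rfl)⟩, h𝓑disj, hsee⟩

theorem seesMatching_of_embedding (hP : ∀ x y z, P x y z → P x z y) {W : Finset V} {a b : ℕ}
    (v : Fin a ⊕ (Fin b ⊕ Fin b) ↪ V) (hvW : ∀ i, v i ∈ W)
    (hv : ∀ j k, P (v (.inl j)) (v (.inr (.inl k))) (v (.inr (.inr k)))) :
    SeesMatching P W a b := by
  set pair : Fin b → Finset V := fun k => {v (.inr (.inl k)), v (.inr (.inr k))}
  have hdisj : ∀ k k', k ≠ k' → Disjoint (pair k) (pair k') := by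
    intro k k' hk
    simp [pair, hk.symm]
  have hpair : ∀ k, #(pair k) = 2 := fun k => card_pair (by simp)
  refine ⟨univ.map (Function.Embedding.inl.trans v), ?_, by simp, univ.image pair, ?_, ?_, ?_, ?_⟩
  · exact fun x hx => by obtain ⟨j, -, rfl⟩ := mem_map.mp hx; exact hvW _
  · rw [card_image_of_injective _ fun k k' h => ?_, card_fin]
    by_contra hk
    simpa [disjoint_self.mp (h ▸ hdisj k k' hk)] using hpair k'
  · simp only [mem_image, mem_univ, true_and, forall_exists_index, forall_apply_eq_imp_iff]
    refine fun k => ⟨hpair k, fun y hy => ?_⟩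
    simp only [pair, mem_insert, mem_singleton] at hy
    rcases hy with rfl | rfl <;> simp [hvW]
  · simp only [mem_image, mem_univ, true_and, forall_exists_index, forall_apply_eq_imp_iff]
    exact fun k k' h => hdisj k k' (fun hk => h (hk ▸ rfl))
  · simp only [mem_map, mem_image, mem_univ, true_and, forall_exists_index,
      forall_apply_eq_imp_iff]
    intro j k y z hyz
    have := congrArg ((↑) : Finset V → Set V) hyz
    push_cast [pair] at this
    rcases Set.pair_eq_pair_iff.mp this with ⟨rfl, rfl⟩ | ⟨rfl, rfl⟩
    · exact hv j k
    · exact hP _ _ _ (hv j k)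

end Seeing

section Triples

variable [LinearOrder V] (P : V → V → V → Prop)

noncomputable def tripleColour (e : Finset V) : Prop × Prop × Prop :=
  if h : #e = 3 then
    (P (e.orderEmbOfFin h 0) (e.orderEmbOfFin h 1) (e.orderEmbOfFin h 2),
      P (e.orderEmbOfFin h 1) (e.orderEmbOfFin h 0) (e.orderEmbOfFin h 2),
      P (e.orderEmbOfFin h 2) (e.orderEmbOfFin h 0) (e.orderEmbOfFin h 1))
  else (False, False, False)

theorem tripleColour_of_lt [DecidableEq V] {x y z : V} (hxy : x < y) (hyz : y < z) :
    tripleColour P {x, y, z} = (P x y z, P y x z, P z x y) := by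
  have h : #{x, y, z} = 3 :=
    card_eq_three.mpr ⟨x, y, z, hxy.ne, (hxy.trans hyz).ne, hyz.ne, rfl⟩
  have hf : ![x, y, z] = ({x, y, z} : Finset V).orderEmbOfFin h :=
    orderEmbOfFin_unique h (fun i => by fin_cases i <;> simp) <| by
      rw [Fin.strictMono_iff_lt_succ]; intro i; fin_cases i <;> simpa
  simp [tripleColour, h, ← hf]

variable {P}

theorem isBlindSet_of_forall_lt (hP : ∀ x y z, P x y z → P x z y) {H : Finset V}
    (h : ∀ x ∈ H, ∀ y ∈ H, ∀ z ∈ H, x < y → y < z → ¬P x y z ∧ ¬P y x z ∧ ¬P z x y) :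
    IsBlindSet P H := by
  intro x hx y hy z hz hxy hxz hyz hPxyz
  wlog hlt : y < z generalizing y z
  · exact this z hz y hy hxz hxy hyz.symm (hP _ _ _ hPxyz)
      (lt_of_le_of_ne (not_lt.mp hlt) hyz.symm)
  rcases lt_trichotomy x y with hxy' | rfl | hyx
  · exact (h x hx y hy z hz hxy' hlt).1 hPxyz
  · contradiction
  rcases lt_trichotomy x z with hxz' | rfl | hzx
  · exact (h y hy x hx z hz hyx hxz').2.1 hPxyz
  · contradiction
  · exact (h y hy z hz x hx hlt hzx).2.2 hPxyz

theorem seesMatching_of_forall_lt [DecidableEq V] (hP : ∀ x y z, P x y z → P x z y)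
    {H : Finset V} {a b : ℕ} (hH : a + 2 * b ≤ #H) {p₁ p₂ p₃ : Prop}
    (h : ∀ x ∈ H, ∀ y ∈ H, ∀ z ∈ H, x < y → y < z →
      (P x y z ↔ p₁) ∧ (P y x z ↔ p₂) ∧ (P z x y ↔ p₃))
    (hp : p₁ ∨ p₂ ∨ p₃) : SeesMatching P H a b := by
  set u := H.orderEmbOfFin rfl
  have key (i j k : Fin #H) (hij : i < j) (hjk : j < k) :
      (P (u i) (u j) (u k) ↔ p₁) ∧ (P (u j) (u i) (u k) ↔ p₂) ∧ (P (u k) (u i) (u j) ↔ p₃) :=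
    h _ (orderEmbOfFin_mem _ _ _) _ (orderEmbOfFin_mem _ _ _) _ (orderEmbOfFin_mem _ _ _)
      (u.strictMono hij) (u.strictMono hjk)
  have build (f : Fin a ⊕ (Fin b ⊕ Fin b) → Fin #H) (hf : Function.Injective f)
      (hfP : ∀ j k, P (u (f (.inl j))) (u (f (.inr (.inl k)))) (u (f (.inr (.inr k))))) :
      SeesMatching P H a b :=
    seesMatching_of_embedding hP (.trans ⟨f, hf⟩ u.toEmbedding)
      (fun _ => orderEmbOfFin_mem _ rfl _) hfP
  -- Put each vertex of `A` before, between or after the two vertices of every pair.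
  rcases hp with hp | hp | hp
  · refine build (Sum.elim (fun j => ⟨j, by omega⟩)
      (Sum.elim (fun k => ⟨a + 2 * k, by omega⟩) fun k => ⟨a + 2 * k + 1, by omega⟩))
      (by rintro (j | k | k) (j' | k' | k') h <;> simp [Fin.ext_iff] at h ⊢ <;> omega)
      fun j k => (key _ _ _ (by simp; omega) (by simp)).1.2 hp
  · refine build (Sum.elim (fun j => ⟨b + j, by omega⟩)
      (Sum.elim (fun k => ⟨k, by omega⟩) fun k => ⟨a + b + k, by omega⟩))
      (by rintro (j | k | k) (j' | k' | k') h <;> simp [Fin.ext_iff] at h ⊢ <;> omega)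
      fun j k => (key _ _ _ (by simp; omega) (by simp; omega)).2.1.2 hp
  · refine build (Sum.elim (fun j => ⟨2 * b + j, by omega⟩)
      (Sum.elim (fun k => ⟨2 * k, by omega⟩) fun k => ⟨2 * k + 1, by omega⟩))
      (by rintro (j | k | k) (j' | k' | k') h <;> simp [Fin.ext_iff] at h ⊢ <;> omega)
      fun j k => (key _ _ _ (by simp) (by simp; omega)).2.2.2 hp

end Triples

theorem exists_seesMatching_or_isBlindSet (a b n : ℕ) :
    ∃ τ, ∀ (V : Type) [DecidableEq V] (P : V → V → V → Prop), (∀ x y z, P x y z → P x z y) →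
      ∀ W : Finset V, τ ≤ #W → SeesMatching P W a b ∨ ∃ S ⊆ W, n ≤ #S ∧ IsBlindSet P S := by
  obtain ⟨N, hN⟩ := exists_isRamseyBound (Prop × Prop × Prop) 3 (a + 2 * b + n)
  refine ⟨N, fun V _ P hP W hW => ?_⟩
  let _ : LinearOrder V := WellOrderingRel.isWellOrder.linearOrder
  obtain ⟨H, hHW, hH, ⟨p₁, p₂, p₃⟩, hc⟩ := hN V (tripleColour P) W hW
  have hom (x) (hx : x ∈ H) (y) (hy : y ∈ H) (z) (hz : z ∈ H) (hxy : x < y) (hyz : y < z) :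
      (P x y z ↔ p₁) ∧ (P y x z ↔ p₂) ∧ (P z x y ↔ p₃) := by
    have := hc {x, y, z} (by simp [insert_subset_iff, hx, hy, hz])
      (card_eq_three.mpr ⟨x, y, z, hxy.ne, (hxy.trans hyz).ne, hyz.ne, rfl⟩)
    simp only [tripleColour_of_lt P hxy hyz, Prod.mk.injEq] at this
    simp only [this, iff_self, and_self]
  by_cases hp : p₁ ∨ p₂ ∨ p₃
  · exact .inl ((seesMatching_of_forall_lt hP (by omega) hom hp).mono hHW)
  · refine .inr ⟨H, hHW, by omega, isBlindSet_of_forall_lt hP fun x hx y hy z hz hxy hyz => ?_⟩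
    simp only [hom x hx y hy z hz hxy hyz]
    tauto

section Web

variable {G : SimpleGraph V} {W : Finset V}
  {Λ : ∀ x y : V, x ∈ W → y ∈ W → x ≠ y → G.Walk x y}

variable (G W Λ) in
def AdjWebPath (x y z : V) : Prop :=
  ∃ (hy : y ∈ W) (hz : z ∈ W) (hyz : y ≠ z), ∃ v ∈ walkVerts G (Λ y z hy hz hyz), G.Adj x v

theorem IsWeb.adjWebPath_swap (hΛ : IsWeb G W Λ) {x y z : V} (h : AdjWebPath G W Λ x y z) :
    AdjWebPath G W Λ x z y := by
  obtain ⟨hy, hz, hyz, v, hv, hxv⟩ := h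
  refine ⟨hz, hy, hyz.symm, v, ?_, hxv⟩
  simpa [walkVerts, hΛ.symm y z hy hz hyz] using hv

theorem stableSet_of_isBlindSet [DecidableEq V] {S S' : Finset V} (hSW : S ⊆ W)
    (hS : IsBlindSet (AdjWebPath G W Λ) S) (hS'S : S' ⊆ S) (hcard : #S' < #S) :
    StableSet G S' := by
  intro x hx y hy hxy
  -- `y` itself lies on the web path from `y` to a third vertex `m` of `S`.
  obtain ⟨m, hmS, hmS'⟩ := exists_mem_notMem_of_card_lt_card hcard
  have hym : y ≠ m := ne_of_mem_of_not_mem hy hmS'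
  exact hS x (hS'S hx) y (hS'S hy) m hmS (G.ne_of_adj hxy) (ne_of_mem_of_not_mem hx hmS') hym
    ⟨hSW (hS'S hy), hSW hmS, hym, y, SimpleGraph.Walk.start_mem_support _, hxy⟩

theorem anticomplete_walkInterior_of_isBlindSet {S : Finset V}
    (hS : IsBlindSet (AdjWebPath G W Λ) S) {x y z : V} (hx : x ∈ S) (hy : y ∈ S) (hz : z ∈ S)
    (hxy : x ≠ y) (hxz : x ≠ z) (hy' : y ∈ W) (hz' : z ∈ W) (hyz : y ≠ z) :
    Anticomplete G {x} (walkInterior G (Λ y z hy' hz' hyz)) := by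
  intro x' hx' v hv hxv
  rw [Set.mem_singleton_iff.mp hx'] at hxv
  exact hS x hx y hy z hz hxy hxz hyz ⟨hy', hz', hyz, v, hv.1, hxv⟩

end Web

theorem statement_2_general (a b s : ℕ) :
    ∃ τ : ℕ, 0 < τ ∧
      ∀ (V : Type) [Fintype V] [DecidableEq V] (G : SimpleGraph V) (W : Finset V)
        (Λ : ∀ x y : V, x ∈ W → y ∈ W → x ≠ y → G.Walk x y),
        IsWeb G W Λ → W.card = τ →
        -- (a)
        (∃ A : Finset V, A ⊆ W ∧ A.card = a ∧
          ∃ 𝓑 : Finset (Finset V), 𝓑.card = b ∧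
            (∀ B ∈ 𝓑, B.card = 2 ∧ B ⊆ W \ A) ∧
            (∀ B ∈ 𝓑, ∀ B' ∈ 𝓑, B ≠ B' → Disjoint B B') ∧
            (∀ x ∈ A, ∀ B ∈ 𝓑, ∀ y z (hy : y ∈ W) (hz : z ∈ W) (hyz : y ≠ z),
              B = {y, z} → ∃ v ∈ walkVerts G (Λ y z hy hz hyz), G.Adj x v)) ∨
        -- (b)
        (∃ S : Finset V, S ⊆ W ∧ S.card = s ∧
          StableSet G ↑S ∧
          (∀ x ∈ S, ∀ y ∈ S, ∀ z ∈ S, x ≠ y → x ≠ z →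
            ∀ (hy : y ∈ W) (hz : z ∈ W) (hyz : y ≠ z),
              Anticomplete G {x} (walkInterior G (Λ y z hy hz hyz)))) := by
  obtain ⟨τ, hτ⟩ := exists_seesMatching_or_isBlindSet a b (s + 1)
  refine ⟨τ + 1, τ.succ_pos, fun V _ _ G W Λ hΛ hW => ?_⟩
  rcases hτ V (AdjWebPath G W Λ) (fun _ _ _ => hΛ.adjWebPath_swap) W (by omega) with
    ⟨A, hAW, hA, 𝓑, h𝓑, h𝓑W, h𝓑disj, hadj⟩ | ⟨S, hSW, hS, hblind⟩
  · exact .inl ⟨A, hAW, hA, 𝓑, h𝓑, h𝓑W, h𝓑disj,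
      fun x hx B hB y z _ _ _ hByz => (hadj x hx B hB y z hByz).2.2.2⟩
  · obtain ⟨S', hS'S, hS'⟩ := exists_subset_card_eq (show s ≤ #S by omega)
    refine .inr ⟨S', hS'S.trans hSW, hS', stableSet_of_isBlindSet hSW hblind hS'S (by omega),
      fun x hx y hy z hz hxy hxz hy' hz' hyz => ?_⟩
    exact anticomplete_walkInterior_of_isBlindSet hblind (hS'S hx) (hS'S hy) (hS'S hz) hxy hxz
      hy' hz' hyz

/-- **Lemma 2.2.** For all `a, b, s ∈ ℕ⁺` there is `τ = τ(a,b,s) ∈ ℕ⁺` such that for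
every graph `G` and every `τ`-web `(W, Λ)` in `G`, one of the following holds:
(a) there are `A ⊆ W` with `|A| = a` and a collection `𝓑` of `b` pairwise disjoint
2-subsets of `W \ A` such that every `x ∈ A` has a neighbor in `Λ_{y,z}` for every
`{y,z} ∈ 𝓑`; (b) there is an `s`-subset `S ⊆ W` which is a stable set and such that
every `x ∈ S` is anticomplete to `Λ*_{y,z}` for all three vertices `x, y, z ∈ S`. -/
theorem statement_2 (a b s : ℕ) (ha : 0 < a) (hb : 0 < b) (hs : 0 < s) :
    ∃ τ : ℕ, 0 < τ ∧
      ∀ (V : Type) [Fintype V] [DecidableEq V] (G : SimpleGraph V) (W : Finset V)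
        (Λ : ∀ x y : V, x ∈ W → y ∈ W → x ≠ y → G.Walk x y),
        IsWeb G W Λ → W.card = τ →
        -- (a)
        (∃ A : Finset V, A ⊆ W ∧ A.card = a ∧
          ∃ 𝓑 : Finset (Finset V), 𝓑.card = b ∧
            (∀ B ∈ 𝓑, B.card = 2 ∧ B ⊆ W \ A) ∧
            (∀ B ∈ 𝓑, ∀ B' ∈ 𝓑, B ≠ B' → Disjoint B B') ∧
            (∀ x ∈ A, ∀ B ∈ 𝓑, ∀ y z (hy : y ∈ W) (hz : z ∈ W) (hyz : y ≠ z),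
              B = {y, z} → ∃ v ∈ walkVerts G (Λ y z hy hz hyz), G.Adj x v)) ∨
        -- (b)
        (∃ S : Finset V, S ⊆ W ∧ S.card = s ∧
          StableSet G ↑S ∧
          (∀ x ∈ S, ∀ y ∈ S, ∀ z ∈ S, x ≠ y → x ≠ z →
            ∀ (hy : y ∈ W) (hz : z ∈ W) (hyz : y ≠ z),
              Anticomplete G {x} (walkInterior G (Λ y z hy hz hyz)))) :=
  statement_2_general a b s
end

section
/- For all r, t ∈ ℕ⁺, there exists ξ = ξ(r,t) ∈ ℕ⁺ with the following property. Let G be a graph and let X_1, …, X_ξ be pairwise disjoint subsets of V(G), each of cardinality at most r, such that for all distinct i, j ∈ {1, …, ξ}, the sets X_i and X_j are not anticomplete in G (in particular each X_i is non-empty). Then G contains an induced subgraph isomorphic to K_t or to K_{t,t}. -/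
variable {V : Type}

open Finset

/-- Multicolour Ramsey property. -/
def RamseyProp (k N : ℕ) (M : Fin k → ℕ) : Prop :=
  ∀ {α : Type} [LinearOrder α] (c : α → α → Fin k) (S : Finset α), N ≤ S.card →
    ∃ j : Fin k, ∃ T : Finset α, T ⊆ S ∧ T.card = M j ∧
      ∀ x ∈ T, ∀ y ∈ T, x < y → c x y = j

theorem ramseyProp_mono {k N N' : ℕ} {M : Fin k → ℕ} (h : RamseyProp k N M) (hN : N ≤ N') :
    RamseyProp k N' M :=
  fun c S hS => h c S (le_trans hN hS)

theorem ramsey_exists_aux : ∀ (n k : ℕ) (M : Fin k → ℕ), (∑ j, M j) = n →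
    ∃ N, RamseyProp k N M := by
  intro n
  induction n using Nat.strong_induction_on with
  | _ n IH =>
    intro k M hsum
    by_cases hz : ∃ j, M j = 0
    · obtain ⟨j, hj⟩ := hz
      exact ⟨0, fun c S _ => ⟨j, ∅, empty_subset _, by simp [hj], by simp⟩⟩
    push_neg at hz
    match k with
    | 0 =>
      refine ⟨1, fun c S hS => ?_⟩
      obtain ⟨x, hx⟩ := card_pos.mp (lt_of_lt_of_le one_pos hS)
      exact (c x x).elim0
    | k + 1 =>
      have hMpos : ∀ j : Fin (k+1), 1 ≤ M j := fun j => Nat.one_le_iff_ne_zero.mpr (hz j)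
      have hstep : ∀ j : Fin (k+1), ∃ Nj,
          RamseyProp (k+1) Nj (Function.update M j (M j - 1)) := by
        intro j
        have hle : M j ≤ ∑ i, M i := Finset.single_le_sum (fun i _ => Nat.zero_le _) (mem_univ j)
        have hupd : (∑ i, Function.update M j (M j - 1) i) = n - 1 := by
          rw [Finset.sum_update_of_mem (mem_univ j)]
          have h2 : (∑ i, M i) = M j + ∑ i ∈ univ.erase j, M i := by
            rw [Finset.add_sum_erase _ _ (mem_univ j)]
          simp only [← Finset.erase_eq]
          have := hMpos j
          omega
        have hlt : n - 1 < n := by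
          have := hMpos j
          have hle' : 1 ≤ ∑ i, M i := le_trans (hMpos j) hle
          omega
        exact IH (n-1) hlt (k+1) _ hupd
      choose Ns hNs using hstep
      refine ⟨(∑ j, Ns j) + 1, ?_⟩
      intro α _ c S hS
      have hne : S.Nonempty := card_pos.mp (by omega)
      set v := S.min' hne with hv
      have hvS : v ∈ S := S.min'_mem hne
      have hfib : (S.erase v).card =
          ∑ j : Fin (k+1), ((S.erase v).filter (fun u => c v u = j)).card :=
        Finset.card_eq_sum_card_fiberwise (fun x _ => mem_univ _)
      have hex : ∃ j, Ns j ≤ ((S.erase v).filter (fun u => c v u = j)).card := by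
        by_contra h
        push_neg at h
        have h1 : (S.erase v).card < ∑ j, Ns j := by
          rw [hfib]
          exact Finset.sum_lt_sum_of_nonempty univ_nonempty (fun i _ => h i)
        rw [card_erase_of_mem hvS] at h1
        omega
      obtain ⟨j, hj⟩ := hex
      obtain ⟨j', T, hTsub, hTcard, hmono⟩ := hNs j c _ hj
      have hTS : T ⊆ S := hTsub.trans ((filter_subset _ _).trans (erase_subset _ _))
      by_cases hjj : j' = j
      · subst hjj
        have hvT : v ∉ T := fun hvT =>
          (Finset.mem_erase.mp ((filter_subset _ _) (hTsub hvT))).1 rfl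
        refine ⟨j', insert v T, insert_subset hvS hTS, ?_, ?_⟩
        · rw [card_insert_of_notMem hvT, hTcard, Function.update_self]
          have := hMpos j'; omega
        · intro x hx y hy hxy
          rcases mem_insert.mp hx with rfl | hxT
          · rcases mem_insert.mp hy with rfl | hyT
            · exact absurd hxy (lt_irrefl _)
            · exact (Finset.mem_filter.mp (hTsub hyT)).2
          · rcases mem_insert.mp hy with rfl | hyT
            · have hx' : v < x := lt_of_le_of_ne (S.min'_le x (hTS hxT))
                (Ne.symm (Finset.mem_erase.mp ((filter_subset _ _) (hTsub hxT))).1)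
              exact absurd hxy (not_lt.mpr hx'.le)
            · exact hmono x hxT y hyT hxy
      · refine ⟨j', T, hTS, ?_, hmono⟩
        rw [hTcard, Function.update_of_ne hjj]

theorem ramsey_exists (k : ℕ) (M : Fin k → ℕ) : ∃ N, RamseyProp k N M :=
  ramsey_exists_aux _ k M rfl

/-- A clique of size `t` gives an embedding of `K_t`. -/
theorem clique_emb {W : Type} (G : SimpleGraph W) {t : ℕ} (z : Fin t → W)
    (hinj : Function.Injective z) (hadj : ∀ p q, p ≠ q → G.Adj (z p) (z q)) :
    Nonempty ((⊤ : SimpleGraph (Fin t)) ↪g G) := by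
  refine ⟨⟨⟨z, hinj⟩, ?_⟩⟩
  intro p q
  simp only [Function.Embedding.coeFn_mk, SimpleGraph.top_adj]
  constructor
  · intro h hpq
    exact G.ne_of_adj h (by rw [hpq])
  · exact hadj p q

theorem cbg_adj {A B : Type} (v w : A ⊕ B) :
    (completeBipartiteGraph A B).Adj v w ↔ (v.isLeft ∧ w.isRight ∨ v.isRight ∧ w.isLeft) :=
  Iff.rfl

/-- **Lemma 2.5.** For all `r, t ∈ ℕ⁺` there is `ξ = ξ(r,t) ∈ ℕ⁺` such that for every
graph `G` and all pairwise disjoint subsets `X_1, …, X_ξ` of `V(G)`, each of cardinality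
at most `r`, such that `X_i` and `X_j` are not anticomplete for all distinct `i, j`,
the graph `G` contains an induced subgraph isomorphic to `K_t` or `K_{t,t}`. -/
theorem statement_4 (r t : ℕ) (hr : 0 < r) (ht : 0 < t) :
    ∃ ξ : ℕ, 0 < ξ ∧
      ∀ (V : Type) [Fintype V] [DecidableEq V] (G : SimpleGraph V) (X : Fin ξ → Finset V),
        (∀ i j, i ≠ j → Disjoint (X i) (X j)) →
        (∀ i, (X i).card ≤ r) →
        (∀ i j, i ≠ j → ¬ Anticomplete G ↑(X i) ↑(X j)) →
        Nonempty ((⊤ : SimpleGraph (Fin t)) ↪g G) ∨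
          Nonempty (completeBipartiteGraph (Fin t) (Fin t) ↪g G) := by
  classical
  obtain ⟨R0, hR0⟩ := ramsey_exists 2 (fun _ => t)
  set R2 := R0 + 1 with hR2def
  have hR2 : RamseyProp 2 R2 (fun _ => t) := ramseyProp_mono hR0 (Nat.le_succ _)
  have hR2pos : 0 < R2 := Nat.succ_pos _
  set m := 2 * R2 + t with hmdef
  obtain ⟨N0, hN0⟩ := ramsey_exists (r*r) (fun _ => m)
  refine ⟨N0 + 1, Nat.succ_pos _, ?_⟩
  intro V _ _ G X hdisj hcard hanti
  -- embeddings of each X i into Fin r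
  have hemb : ∀ i, Nonempty ((X i : Finset V) ↪ Fin r) := by
    intro i
    apply Function.Embedding.nonempty_of_card_le
    rw [Fintype.card_coe, Fintype.card_fin]
    exact hcard i
  have e : ∀ i, (X i : Finset V) ↪ Fin r := fun i => (hemb i).some
  -- choose edges
  have key : ∀ i j : Fin (N0+1), i ≠ j → ∃ x, ∃ y, x ∈ X i ∧ y ∈ X j ∧ G.Adj x y := by
    intro i j hij
    by_contra h
    push_neg at h
    apply hanti i j hij
    intro x hx y hy hxy
    exact h x y (Finset.mem_coe.mp hx) (Finset.mem_coe.mp hy) hxy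
  choose xf yf hxf hyf hadjf using key
  have hrr : 0 < r * r := Nat.mul_pos hr hr
  set c : Fin (N0+1) → Fin (N0+1) → Fin (r*r) := fun i j =>
    if h : i ≠ j then finProdFinEquiv (e i ⟨xf i j h, hxf i j h⟩, e j ⟨yf i j h, hyf i j h⟩)
    else ⟨0, hrr⟩ with hcdef
  obtain ⟨q, T, -, hTcard, hmono⟩ := hN0 c Finset.univ (by simp)
  set a := (finProdFinEquiv.symm q).1 with hadef
  set b := (finProdFinEquiv.symm q).2 with hbdef
  have hmono' : ∀ i ∈ T, ∀ j ∈ T, ∀ (h : i < j),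
      e i ⟨xf i j h.ne, hxf i j h.ne⟩ = a ∧ e j ⟨yf i j h.ne, hyf i j h.ne⟩ = b := by
    intro i hi j hj h
    have hc := hmono i hi j hj h
    simp only [hcdef] at hc
    rw [dif_pos h.ne] at hc
    have hpair := (Equiv.apply_eq_iff_eq_symm_apply _).mp hc
    exact ⟨congrArg Prod.fst hpair, congrArg Prod.snd hpair⟩
  -- well-definedness of chosen endpoints
  have hxwd : ∀ i ∈ T, ∀ j ∈ T, ∀ j' ∈ T, ∀ (h : i < j) (h' : i < j'),
      xf i j h.ne = xf i j' h'.ne := by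
    intro i hi j hj j' hj' h h'
    have h1 := (hmono' i hi j hj h).1
    have h2 := (hmono' i hi j' hj' h').1
    exact Subtype.ext_iff.mp ((e i).injective (h1.trans h2.symm))
  have hywd : ∀ i ∈ T, ∀ i' ∈ T, ∀ j ∈ T, ∀ (h : i < j) (h' : i' < j),
      yf i j h.ne = yf i' j h'.ne := by
    intro i hi i' hi' j hj h h'
    have h1 := (hmono' i hi j hj h).2
    have h2 := (hmono' i' hi' j hj h').2
    exact Subtype.ext_iff.mp ((e j).injective (h1.trans h2.symm))
  -- distinct vertices from distinct sets
  have hvtx : ∀ {i j : Fin (N0+1)} {x y : V}, x ∈ X i → y ∈ X j → i ≠ j → x ≠ y := by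
    intro i j x y hx hy hij heq
    exact (Finset.disjoint_left.mp (hdisj i j hij) hx) (heq ▸ hy)
  -- enumerate T
  set σ := T.orderIsoOfFin hTcard with hσdef
  set idx : Fin m → Fin (N0+1) := fun p => (σ p : Fin (N0+1)) with hidxdef
  have hidxT : ∀ p, idx p ∈ T := fun p => (σ p).2
  have hidxmono : StrictMono idx := fun p p' h => Subtype.coe_lt_coe.mpr (σ.strictMono h)
  have hmpos : 0 < m := by omega
  set J : Fin (N0+1) := idx ⟨m-1, by omega⟩ with hJdef
  by_cases hab : a = b
  · -- clique case
    left
    have hq : ∀ p : Fin t, (p : ℕ) < m := fun p => lt_of_lt_of_le p.2 (by omega)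
    set ii : Fin t → Fin (N0+1) := fun p => idx ⟨p, hq p⟩ with hiidef
    have hiimono : StrictMono ii := fun p p' h => hidxmono (Fin.mk_lt_mk.mpr (Fin.lt_def.mp h))
    have hiltJ : ∀ p : Fin t, ii p < J := by
      intro p
      apply hidxmono
      simp only [Fin.lt_def]
      have := p.2
      omega
    set z : Fin t → V := fun p => xf (ii p) J (hiltJ p).ne with hzdef
    have hzmem : ∀ p, z p ∈ X (ii p) := fun p => hxf _ _ _
    have hzinj : Function.Injective z := by
      intro p p' hpp
      by_contra hne
      exact hvtx (hzmem p) (hzmem p') (fun h => hne (hiimono.injective h)) hpp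
    have hzadj : ∀ p p', p < p' → G.Adj (z p) (z p') := by
      intro p p' h
      have hlt : ii p < ii p' := hiimono h
      have hx1 : xf (ii p) (ii p') hlt.ne = z p :=
        hxwd (ii p) (hidxT _) (ii p') (hidxT _) J (hidxT _) hlt (hiltJ p)
      have hy1 : yf (ii p) (ii p') hlt.ne = z p' := by
        have h1 := (hmono' (ii p) (hidxT _) (ii p') (hidxT _) hlt).2
        have h2 := (hmono' (ii p') (hidxT _) J (hidxT _) (hiltJ p')).1
        rw [← hab] at h1
        exact Subtype.ext_iff.mp ((e (ii p')).injective (h1.trans h2.symm))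
      have := hadjf (ii p) (ii p') hlt.ne
      rwa [hx1, hy1] at this
    exact clique_emb G z hzinj (fun p p' hpp => by
      rcases hpp.lt_or_gt with h | h
      · exact hzadj p p' h
      · exact (hzadj p' p h).symm)
  · -- bipartite case setup
    have hq1 : ∀ p : Fin R2, (p : ℕ) < m := fun p => lt_of_lt_of_le p.2 (by omega)
    have hq2 : ∀ p : Fin R2, m - R2 + (p : ℕ) < m := fun p => by have := p.2; omega
    set i1 : Fin R2 → Fin (N0+1) := fun p => idx ⟨p, hq1 p⟩ with hi1def
    set i2 : Fin R2 → Fin (N0+1) := fun p => idx ⟨m - R2 + p, hq2 p⟩ with hi2def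
    set I0 : Fin (N0+1) := idx ⟨0, hmpos⟩ with hI0def
    have hi1mono : StrictMono i1 := fun p p' h => hidxmono (Fin.mk_lt_mk.mpr (Fin.lt_def.mp h))
    have hi2mono : StrictMono i2 := fun p p' h => hidxmono (Fin.mk_lt_mk.mpr (Nat.add_lt_add_left (Fin.lt_def.mp h) _))
    have h12 : ∀ p p' : Fin R2, i1 p < i2 p' := by
      intro p p'
      apply hidxmono
      simp only [Fin.lt_def]
      have := p.2
      omega
    have h1J : ∀ p : Fin R2, i1 p < J := by
      intro p
      apply hidxmono
      simp only [Fin.lt_def]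
      have := p.2
      omega
    have h02 : ∀ p : Fin R2, I0 < i2 p := by
      intro p
      apply hidxmono
      simp only [Fin.lt_def]
      omega
    set u : Fin R2 → V := fun p => xf (i1 p) J (h1J p).ne with hudef
    set w : Fin R2 → V := fun p => yf I0 (i2 p) (h02 p).ne with hwdef
    have humem : ∀ p, u p ∈ X (i1 p) := fun p => hxf _ _ _
    have hwmem : ∀ p, w p ∈ X (i2 p) := fun p => hyf _ _ _
    have hcross : ∀ p p', G.Adj (u p) (w p') := by
      intro p p'
      have h := hadjf (i1 p) (i2 p') (h12 p p').ne
      have hx1 : xf (i1 p) (i2 p') (h12 p p').ne = u p :=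
        hxwd (i1 p) (hidxT _) (i2 p') (hidxT _) J (hidxT _) (h12 p p') (h1J p)
      have hy1 : yf (i1 p) (i2 p') (h12 p p').ne = w p' :=
        hywd (i1 p) (hidxT _) I0 (hidxT _) (i2 p') (hidxT _) (h12 p p') (h02 p')
      rwa [hx1, hy1] at h
    -- Ramsey on each side
    set cu : Fin R2 → Fin R2 → Fin 2 := fun p p' => if G.Adj (u p) (u p') then 0 else 1
      with hcudef
    set cw : Fin R2 → Fin R2 → Fin 2 := fun p p' => if G.Adj (w p) (w p') then 0 else 1
      with hcwdef
    obtain ⟨ju, Tu, -, hTucard, hTumono⟩ := hR2 cu Finset.univ (by simp)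
    obtain ⟨jw, Tw, -, hTwcard, hTwmono⟩ := hR2 cw Finset.univ (by simp)
    set A := Tu.orderIsoOfFin hTucard with hAdef
    set B := Tw.orderIsoOfFin hTwcard with hBdef
    have hAmem : ∀ p : Fin t, (A p : Fin R2) ∈ Tu := fun p => (A p).2
    have hBmem : ∀ p : Fin t, (B p : Fin R2) ∈ Tw := fun p => (B p).2
    have hAmono : StrictMono (fun p => (A p : Fin R2)) :=
      fun p p' h => Subtype.coe_lt_coe.mpr (A.strictMono h)
    have hBmono : StrictMono (fun p => (B p : Fin R2)) :=
      fun p p' h => Subtype.coe_lt_coe.mpr (B.strictMono h)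
    by_cases hju : ju = 0
    · -- clique among u's
      left
      subst hju
      have hadjC : ∀ p p' : Fin t, p < p' → G.Adj (u (A p)) (u (A p')) := by
        intro p p' h
        have := hTumono (A p) (hAmem p) (A p') (hAmem p') (hAmono h)
        simp only [hcudef] at this
        by_contra hno
        rw [if_neg hno] at this
        exact absurd this (by decide)
      refine clique_emb G (fun p => u (A p)) ?_ (fun p p' hpp => ?_)
      · intro p p' hpp
        by_contra hne
        exact hvtx (humem _) (humem _)
          (fun h => hne (hAmono.injective (hi1mono.injective h))) hpp
      · rcases hpp.lt_or_gt with h | h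
        · exact hadjC p p' h
        · exact (hadjC p' p h).symm
    by_cases hjw : jw = 0
    · -- clique among w's
      left
      subst hjw
      have hadjC : ∀ p p' : Fin t, p < p' → G.Adj (w (B p)) (w (B p')) := by
        intro p p' h
        have := hTwmono (B p) (hBmem p) (B p') (hBmem p') (hBmono h)
        simp only [hcwdef] at this
        by_contra hno
        rw [if_neg hno] at this
        exact absurd this (by decide)
      refine clique_emb G (fun p => w (B p)) ?_ (fun p p' hpp => ?_)
      · intro p p' hpp
        by_contra hne
        exact hvtx (hwmem _) (hwmem _)
          (fun h => hne (hBmono.injective (hi2mono.injective h))) hpp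
      · rcases hpp.lt_or_gt with h | h
        · exact hadjC p p' h
        · exact (hadjC p' p h).symm
    · -- both independent: K_{t,t}
      right
      have hju1 : ju = 1 := by omega
      have hjw1 : jw = 1 := by omega
      subst hju1; subst hjw1
      have huind : ∀ p p' : Fin t, p ≠ p' → ¬ G.Adj (u (A p)) (u (A p')) := by
        intro p p' hpp hadj'
        rcases hpp.lt_or_gt with h | h
        · have := hTumono (A p) (hAmem p) (A p') (hAmem p') (hAmono h)
          simp only [hcudef, if_pos hadj'] at this
          exact absurd this (by decide)
        · have := hTumono (A p') (hAmem p') (A p) (hAmem p) (hAmono h)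
          simp only [hcudef, if_pos hadj'.symm] at this
          exact absurd this (by decide)
      have hwind : ∀ p p' : Fin t, p ≠ p' → ¬ G.Adj (w (B p)) (w (B p')) := by
        intro p p' hpp hadj'
        rcases hpp.lt_or_gt with h | h
        · have := hTwmono (B p) (hBmem p) (B p') (hBmem p') (hBmono h)
          simp only [hcwdef, if_pos hadj'] at this
          exact absurd this (by decide)
        · have := hTwmono (B p') (hBmem p') (B p) (hBmem p) (hBmono h)
          simp only [hcwdef, if_pos hadj'.symm] at this
          exact absurd this (by decide)
      set f : Fin t ⊕ Fin t → V := Sum.elim (fun p => u (A p)) (fun p => w (B p)) with hfdef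
      have hi1i2 : ∀ p p' : Fin R2, i1 p ≠ i2 p' := fun p p' => (h12 p p').ne
      have hfinj : Function.Injective f := by
        intro s s' hss
        rcases s with p | p <;> rcases s' with p' | p'
        · simp only [hfdef, Sum.elim_inl] at hss
          by_contra hne
          have hne' : p ≠ p' := fun h => hne (by rw [h])
          exact hvtx (humem _) (humem _)
            (fun h => hne' (hAmono.injective (hi1mono.injective h))) hss
        · simp only [hfdef, Sum.elim_inl, Sum.elim_inr] at hss
          exact absurd hss (hvtx (humem _) (hwmem _) (hi1i2 _ _))
        · simp only [hfdef, Sum.elim_inl, Sum.elim_inr] at hss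
          exact absurd hss.symm (hvtx (humem _) (hwmem _) (hi1i2 _ _))
        · simp only [hfdef, Sum.elim_inr] at hss
          by_contra hne
          have hne' : p ≠ p' := fun h => hne (by rw [h])
          exact hvtx (hwmem _) (hwmem _)
            (fun h => hne' (hBmono.injective (hi2mono.injective h))) hss
      refine ⟨⟨⟨f, hfinj⟩, ?_⟩⟩
      intro s s'
      rcases s with p | p <;> rcases s' with p' | p' <;>
        simp only [hfdef, Function.Embedding.coeFn_mk, Sum.elim_inl, Sum.elim_inr,
          cbg_adj, Sum.isLeft_inl, Sum.isRight_inl, Sum.isLeft_inr,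
          Sum.isRight_inr]
      · constructor
        · intro h
          by_cases hpp : p = p'
          · subst hpp; exact absurd h (G.irrefl)
          · exact absurd h (huind p p' hpp)
        · simp
      · constructor
        · intro _; simp
        · intro _; exact hcross _ _
      · constructor
        · intro _; simp
        · intro _; exact (hcross _ _).symm
      · constructor
        · intro h
          by_cases hpp : p = p'
          · subst hpp; exact absurd h (G.irrefl)
          · exact absurd h (hwind p p' hpp)
        · simp
end

section
/- For all r ∈ ℕ ∪ {0}, ξ, s ∈ ℕ⁺, there exists Ω ∈ ℕ⁺ with the following property. Let G be a graph and let (W,Λ) be an (r,Ω)-web in G. Then one of the following holds: (a) there exist pairwise disjoint subsets X_1, …, X_ξ of V(G), each of cardinality at most max{r+3, 2r}, such that for all distinct i, j ∈ {1, …, ξ}, the sets X_i and X_j are not anticomplete in G; or (b) there exists S ⊆ W with |S| = s such that S is a stable set in G, for all three vertices x, y, z ∈ S the vertex x is anticomplete to Λ*_{y,z}, and for all distinct 2-subsets {x,y}, {x',y'} of S the sets Λ*_{x,y} and Λ*_{x',y'} are anticomplete in G. -/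
/-!
Common definitions: anticomplete sets, stable sets, induced paths,
and webs, following the paper's terminology.
-/

variable {V : Type} {α : Type}

open Finset

/-!
A *part* of a web is a vertex or the interior of a web path; two parts touch if they are not
anticomplete. Colour each increasing quadruple of web vertices by which of its parts, taken at
incomparable pairs of positions, touch, and apply Ramsey's theorem for 4-tuples to get a long
homogeneous sequence. If its colour records a touching, lay out `4 (ξ + 1)` terms of the
sequence as a grid with one column per position: each of the first `ξ` rows gives a union of
two parts, these are pairwise disjoint, and homogeneity makes any two of them touch, which is
(a). Otherwise no two incomparable parts along the sequence touch, and its first `s` terms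
satisfy (b).
-/
def OrderedRamseyBound (C : Type) (k m n : ℕ) : Prop :=
  ∀ {α : Type} [LinearOrder α] (f : (Fin k → α) → C) (A : Finset α), n ≤ #A →
    ∃ B ⊆ A, #B = m ∧ ∃ c, ∀ σ : Fin k → α, StrictMono σ → (∀ i, σ i ∈ B) → f σ = c

lemma orderedRamseyBound_zero (C : Type) (m : ℕ) : OrderedRamseyBound C 0 m m := by
  intro α _ f A hA
  obtain ⟨B, hBA, hB⟩ := exists_subset_card_eq hA
  exact ⟨B, hBA, hB, f finZeroElim, fun σ _ _ => congrArg f (Subsingleton.elim _ _)⟩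

/-- Peel off the minimum `a` of `A` and make the colour of the tuples starting at `a` constant
on the rest. -/
lemma exists_firstEntry_homogeneous {C : Type} {k : ℕ}
    (hR : ∀ m, ∃ n, OrderedRamseyBound C k m n) (j : ℕ) :
    ∃ N, ∀ {α : Type} [LinearOrder α] (f : (Fin (k + 1) → α) → C) (A : Finset α), N ≤ #A →
      ∃ B ⊆ A, #B = j ∧ ∃ c : α → C,
        ∀ σ : Fin (k + 1) → α, StrictMono σ → (∀ i, σ i ∈ B) → f σ = c (σ 0) := by
  induction j with
  | zero =>
    refine ⟨0, fun f A _ => ⟨∅, empty_subset _, rfl, fun a => f fun _ => a, ?_⟩⟩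
    intro σ _ hσ
    exact absurd (hσ 0) (notMem_empty _)
  | succ j ih =>
    obtain ⟨N, hN⟩ := ih
    obtain ⟨n, hn⟩ := hR N
    refine ⟨n + 1, fun {α} _ f A hA => ?_⟩
    have hA₀ : A.Nonempty := card_pos.mp (by omega)
    set a := A.min' hA₀
    have haA : a ∈ A := A.min'_mem hA₀
    obtain ⟨B', hB'A, hB', ca, hca⟩ :=
      hn (fun τ => f (Fin.cons a τ)) (A.erase a) (by rw [card_erase_of_mem haA]; omega)
    obtain ⟨B, hBB', hB, c, hc⟩ := hN f B' hB'.ge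
    have hBA : B ⊆ A.erase a := hBB'.trans hB'A
    have ha_lt : ∀ x ∈ B, a < x := fun x hx =>
      lt_of_le_of_ne (A.min'_le x (mem_of_mem_erase (hBA hx))) (ne_of_mem_erase (hBA hx)).symm
    have haB : a ∉ B := fun h => lt_irrefl a (ha_lt a h)
    refine ⟨insert a B, insert_subset haA (hBA.trans (erase_subset a A)),
      by rw [card_insert_of_notMem haB, hB], Function.update c a ca, fun σ hσ hσB => ?_⟩
    have htail : StrictMono (Fin.tail σ) := fun i i' h => hσ (Fin.succ_lt_succ_iff.mpr h)
    rcases mem_insert.mp (hσB 0) with h0 | h0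
    · have htailB : ∀ i, Fin.tail σ i ∈ B := fun i =>
        (mem_insert.mp (hσB i.succ)).resolve_left (h0 ▸ (hσ (Fin.succ_pos i)).ne')
      rw [h0, Function.update_self, ← Fin.cons_self_tail σ, h0]
      exact hca _ htail fun i => hBB' (htailB i)
    · have hσB' : ∀ i, σ i ∈ B := fun i =>
        (mem_insert.mp (hσB i)).resolve_left
          ((ha_lt _ h0).trans_le (hσ.monotone (Fin.zero_le i))).ne'
      rw [Function.update_of_ne (ha_lt _ h0).ne']
      exact hc σ hσ hσB'

lemma exists_orderedRamseyBound_succ {C : Type} [Finite C] {k : ℕ}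
    (hR : ∀ m, ∃ n, OrderedRamseyBound C k m n) (m : ℕ) :
    ∃ n, OrderedRamseyBound C (k + 1) m n := by
  classical
  have := Fintype.ofFinite C
  obtain ⟨N, hN⟩ := exists_firstEntry_homogeneous hR (Fintype.card C * m + 1)
  refine ⟨N, fun f A hA => ?_⟩
  obtain ⟨B, hBA, hB, c, hc⟩ := hN f A hA
  obtain ⟨v, -, hv⟩ := exists_lt_card_fiber_of_mul_lt_card_of_maps_to
    (fun x _ => mem_univ (c x)) (by rw [card_univ, hB]; omega : #(univ : Finset C) * m < #B)
  obtain ⟨B₀, hB₀, hB₀m⟩ := exists_subset_card_eq hv.le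
  refine ⟨B₀, (hB₀.trans (filter_subset _ _)).trans hBA, hB₀m, v, fun σ hσ hσB₀ => ?_⟩
  rw [hc σ hσ fun i => (mem_filter.mp (hB₀ (hσB₀ i))).1]
  exact (mem_filter.mp (hB₀ (hσB₀ 0))).2

theorem exists_orderedRamseyBound (C : Type) [Finite C] (k m : ℕ) :
    ∃ n, OrderedRamseyBound C k m n := by
  induction k generalizing m with
  | zero => exact ⟨m, orderedRamseyBound_zero C m⟩
  | succ k ih => exact exists_orderedRamseyBound_succ ih m

theorem exists_strictMono_homogeneous (C : Type) [Finite C] (k m : ℕ) :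
    ∃ n, ∀ N, n ≤ N → ∀ f : (Fin k → Fin N) → C, ∃ e : Fin m → Fin N, StrictMono e ∧
      ∀ σ τ : Fin k → Fin m, StrictMono σ → StrictMono τ → f (e ∘ σ) = f (e ∘ τ) := by
  obtain ⟨n, hn⟩ := exists_orderedRamseyBound C k m
  refine ⟨n, fun N hN f => ?_⟩
  obtain ⟨B, -, hB, c, hc⟩ := hn f univ (by rwa [card_univ, Fintype.card_fin])
  set e := B.orderEmbOfFin hB
  have he : ∀ σ : Fin k → Fin m, StrictMono σ → f (e ∘ σ) = c := fun σ hσ =>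
    hc _ (e.strictMono.comp hσ) fun i => B.orderEmbOfFin_mem hB (σ i)
  exact ⟨e, e.strictMono, fun σ τ hσ hτ => (he σ hσ).trans (he τ hτ).symm⟩

def blockIndex {n b M : ℕ} (hM : n * b ≤ M) (p : Fin n) (t : Fin b) : Fin M :=
  Fin.castLE hM (finProdFinEquiv (p, t))

lemma blockIndex_injective {n b M : ℕ} (hM : n * b ≤ M) :
    Function.Injective (Function.uncurry (blockIndex hM)) :=
  (Fin.castLE_injective hM).comp finProdFinEquiv.injective

lemma strictMono_blockIndex {n b M : ℕ} (hM : n * b ≤ M) (α : Fin n → Fin b) :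
    StrictMono fun p => blockIndex hM p (α p) := by
  intro p q hpq
  simp only [blockIndex, Fin.lt_def, Fin.val_castLE, finProdFinEquiv_apply_val]
  have hblock := Nat.mul_le_mul_left b (Fin.lt_def.mp hpq)
  rw [Nat.mul_succ] at hblock
  omega

lemma forall_of_forall_strictMono [LinearOrder α] [Fintype α] (h4 : 4 ≤ Fintype.card α)
    {P : α → α → α → α → Prop}
    (h : ∀ σ : Fin 4 → α, StrictMono σ → ∀ i j k l, P (σ i) (σ j) (σ k) (σ l))
    (a b c d : α) : P a b c d := by
  classical
  obtain ⟨u, habcd, -, hu⟩ :=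
    exists_subsuperset_card_eq (subset_univ {a, b, c, d}) card_le_four (by rwa [card_univ])
  have hrange : ∀ x ∈ ({a, b, c, d} : Finset α), x ∈ Set.range (u.orderEmbOfFin hu) :=
    fun x hx => by rw [u.range_orderEmbOfFin hu]; exact habcd hx
  obtain ⟨i, hi⟩ := hrange a (by simp)
  obtain ⟨j, hj⟩ := hrange b (by simp)
  obtain ⟨k, hk⟩ := hrange c (by simp)
  obtain ⟨l, hl⟩ := hrange d (by simp)
  exact hi ▸ hj ▸ hk ▸ hl ▸ h _ (u.orderEmbOfFin hu).strictMono i j k l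

lemma Anticomplete.mono {G : SimpleGraph V} {X Y X' Y' : Set V} (h : Anticomplete G X Y)
    (hX : X' ⊆ X) (hY : Y' ⊆ Y) : Anticomplete G X' Y' :=
  fun _ hx _ hy => h (hX hx) (hY hy)

lemma Set.pair_eq_of_pair_subset {x y x' y' : V} (hxy : x ≠ y)
    (h : ({x, y} : Set V) ⊆ {x', y'}) : ({x, y} : Set V) = {x', y'} := by
  rw [Set.pair_subset_iff] at h
  obtain ⟨rfl | rfl, rfl | rfl⟩ := h
  exacts [absurd rfl hxy, rfl, Set.pair_comm _ _, absurd rfl hxy]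

lemma exists_ne_of_not_pair_subset {ι : Type} {f : ι → V} {i j k l : ι}
    (h : ¬ ({f i, f j} : Set V) ⊆ {f k, f l}) : ∃ p, (p = i ∨ p = j) ∧ p ≠ k ∧ p ≠ l := by
  by_contra! hc
  have key : ∀ p, (p = i ∨ p = j) → f p ∈ ({f k, f l} : Set V) := fun p hp => by
    rcases eq_or_ne p k with rfl | hpk
    · simp
    · simp [hc p hp hpk]
  exact h (Set.pair_subset_iff.mpr ⟨key i (.inl rfl), key j (.inr rfl)⟩)

def HasTouchingFamily (G : SimpleGraph V) (ξ b : ℕ) : Prop :=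
  ∃ X : Fin ξ → Finset V,
    (∀ i j, i ≠ j → Disjoint (X i) (X j)) ∧ (∀ i, (X i).card ≤ b) ∧
    (∀ i j, i ≠ j → ¬ Anticomplete G ↑(X i) ↑(X j))

lemma HasTouchingFamily.mono {G : SimpleGraph V} {ξ b b' : ℕ} (h : HasTouchingFamily G ξ b)
    (hb : b ≤ b') : HasTouchingFamily G ξ b' :=
  let ⟨X, hdisj, hcard, htouch⟩ := h
  ⟨X, hdisj, fun i => (hcard i).trans hb, htouch⟩

section Web

variable [DecidableEq V] (G : SimpleGraph V) (W : Finset V)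
  (Λ : ∀ x y : V, x ∈ W → y ∈ W → x ≠ y → G.Walk x y)

def webInterior (x y : V) : Finset V :=
  if h : x ∈ W ∧ y ∈ W ∧ x ≠ y then (Λ x y h.1 h.2.1 h.2.2).support.toFinset \ {x, y} else ∅

/-- A vertex `x` is encoded as the degenerate pair `(x, x)`: this puts vertices and path
interiors on the same footing. -/
def webPart (x y : V) : Finset V :=
  if x = y then {x} else webInterior G W Λ x y

/-- The two pairs are required to be incomparable, which excludes the touchings forced by the
web itself, such as a path interior with itself or with one of its ends. -/
def Touch (x y x' y' : V) : Prop :=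
  ¬ ({x, y} : Set V) ⊆ {x', y'} ∧ ¬ ({x', y'} : Set V) ⊆ {x, y} ∧
    ¬ Anticomplete G ↑(webPart G W Λ x y) ↑(webPart G W Λ x' y')

def touchPattern (v : Fin 4 → V) : Fin 4 → Fin 4 → Fin 4 → Fin 4 → Prop :=
  fun i j k l => Touch G W Λ (v i) (v j) (v k) (v l)

variable {G W Λ}

lemma coe_webInterior {x y : V} (hx : x ∈ W) (hy : y ∈ W) (hxy : x ≠ y) :
    (webInterior G W Λ x y : Set V) = walkInterior G (Λ x y hx hy hxy) := by
  ext u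
  simp [webInterior, hx, hy, hxy, walkInterior]

@[simp]
lemma webPart_self (x : V) : webPart G W Λ x x = {x} := if_pos rfl

@[simp]
lemma webPart_of_ne {x y : V} (hxy : x ≠ y) : webPart G W Λ x y = webInterior G W Λ x y :=
  if_neg hxy

lemma card_webInterior_le {r : ℕ}
    (hlen : ∀ x y (hx : x ∈ W) (hy : y ∈ W) (hxy : x ≠ y), (Λ x y hx hy hxy).length ≤ r + 1)
    (x y : V) : #(webInterior G W Λ x y) ≤ r := by
  unfold webInterior
  split_ifs with h
  · obtain ⟨hx, hy, hxy⟩ := h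
    have hends : ({x, y} : Finset V) ⊆ (Λ x y hx hy hxy).support.toFinset := by
      simp [insert_subset_iff]
    have hsupp := (List.toFinset_card_le (Λ x y hx hy hxy).support).trans_eq
      (Λ x y hx hy hxy).length_support
    rw [card_sdiff_of_subset hends, card_pair hxy]
    have := hlen x y hx hy hxy
    omega
  · simp

lemma card_webPart_le {r : ℕ}
    (hlen : ∀ x y (hx : x ∈ W) (hy : y ∈ W) (hxy : x ≠ y), (Λ x y hx hy hxy).length ≤ r + 1)
    (x y : V) : #(webPart G W Λ x y) ≤ max 1 r := by
  unfold webPart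
  split_ifs
  · simp
  · exact (card_webInterior_le hlen x y).trans (le_max_right 1 r)

lemma separated_of_forall_not_touch {S : Finset V}
    (hS : ∀ x ∈ S, ∀ y ∈ S, ∀ x' ∈ S, ∀ y' ∈ S, ¬ Touch G W Λ x y x' y') :
    StableSet G ↑S ∧
      (∀ x ∈ S, ∀ y ∈ S, ∀ z ∈ S, x ≠ y → x ≠ z →
        ∀ (hy : y ∈ W) (hz : z ∈ W) (hyz : y ≠ z),
          Anticomplete G {x} (walkInterior G (Λ y z hy hz hyz))) ∧
      (∀ x ∈ S, ∀ y ∈ S, ∀ x' ∈ S, ∀ y' ∈ S,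
        ∀ (hx : x ∈ W) (hy : y ∈ W) (hx' : x' ∈ W) (hy' : y' ∈ W)
          (hxy : x ≠ y) (hxy' : x' ≠ y'), ({x, y} : Set V) ≠ {x', y'} →
          Anticomplete G (walkInterior G (Λ x y hx hy hxy))
            (walkInterior G (Λ x' y' hx' hy' hxy'))) := by
  refine ⟨fun x hx y hy hadj => ?_, fun x hx y hy z hz hxy hxz hyW hzW hyz => ?_,
    fun x hx y hy x' hx' y' hy' hxW hyW hx'W hy'W hxy hxy' hne => ?_⟩
  · have hne := G.ne_of_adj hadj
    exact hS x hx x hx y hy y hy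
      ⟨by simpa using hne, by simpa using hne.symm, fun h => h (by simp) (by simp) hadj⟩
  · by_contra h
    refine hS x hx x hx y hy z hz ⟨by simp [hxy, hxz], fun hsub => hyz ?_, ?_⟩
    · simp only [Set.pair_subset_iff, Set.pair_eq_singleton, Set.mem_singleton_iff] at hsub
      rw [hsub.1, hsub.2]
    · rwa [webPart_self, webPart_of_ne hyz, coe_singleton, coe_webInterior hyW hzW hyz]
  · rw [← coe_webInterior hxW hyW hxy, ← coe_webInterior hx'W hy'W hxy', ← webPart_of_ne hxy,
      ← webPart_of_ne hxy']
    by_contra h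
    exact hS x hx y hy x' hx' y' hy' ⟨fun hsub => hne (Set.pair_eq_of_pair_subset hxy hsub),
      fun hsub => hne (Set.pair_eq_of_pair_subset hxy' hsub).symm, h⟩

namespace IsWeb

variable (hW : IsWeb G W Λ)
include hW

lemma webInterior_comm (x y : V) : webInterior G W Λ x y = webInterior G W Λ y x := by
  unfold webInterior
  by_cases h : x ∈ W ∧ y ∈ W ∧ x ≠ y
  · rw [dif_pos h, dif_pos ⟨h.2.1, h.1, h.2.2.symm⟩, hW.symm x y h.1 h.2.1 h.2.2, pair_comm]
    simp
  · rw [dif_neg h, dif_neg fun h' => h ⟨h'.2.1, h'.1, h'.2.2.symm⟩]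

lemma webPart_comm (x y : V) : webPart G W Λ x y = webPart G W Λ y x := by
  unfold webPart
  split_ifs with h h' h'
  · rw [h]
  · exact absurd h.symm h'
  · exact absurd h'.symm h
  · exact hW.webInterior_comm x y

lemma notMem_webInterior {u x y : V} (hu : u ∈ W) (hux : u ≠ x) : u ∉ webInterior G W Λ x y := by
  unfold webInterior
  split_ifs with h
  · obtain ⟨hx, hy, hxy⟩ := h
    intro hmem
    simp only [mem_sdiff, List.mem_toFinset, mem_insert, mem_singleton, not_or] at hmem
    have hne : ({x, y} : Set V) ≠ {u, x} := fun heq =>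
      hmem.2.2 ((heq ▸ (by simp : y ∈ ({x, y} : Set V))).resolve_right hxy.symm).symm
    have hinter := hW.inter x y u x hx hy hu hx hxy hux hne
    have : u ∈ ({x, y} : Set V) ∩ {u, x} :=
      hinter ▸ ⟨hmem.1, (Λ u x hu hx hux).start_mem_support⟩
    simp_all
  · exact notMem_empty u

lemma disjoint_webInterior {x y x' y' : V} (hne : ({x, y} : Set V) ≠ {x', y'}) :
    Disjoint (webInterior G W Λ x y) (webInterior G W Λ x' y') := by
  unfold webInterior
  split_ifs with h h'
  · rw [disjoint_left]
    intro u hu hu'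
    simp only [mem_sdiff, List.mem_toFinset, mem_insert, mem_singleton, not_or] at hu hu'
    have hinter := hW.inter x y x' y' h.1 h.2.1 h'.1 h'.2.1 h.2.2 h'.2.2 hne
    have : u ∈ ({x, y} : Set V) ∩ {x', y'} := hinter ▸ ⟨hu.1, hu'.1⟩
    simp_all
  all_goals simp

lemma disjoint_webPart {u x y x' y' : V} (hu : u = x ∨ u = y) (huW : u ∈ W) (hx' : x' ∈ W)
    (hux' : u ≠ x') (huy' : u ≠ y') :
    Disjoint (webPart G W Λ x y) (webPart G W Λ x' y') := by
  wlog hux : u = x generalizing x y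
  · rw [hW.webPart_comm x y]
    exact this hu.symm (hu.resolve_left hux)
  subst hux
  unfold webPart
  split_ifs with hxy hxy'
  · exact disjoint_singleton.mpr hux'
  · exact disjoint_singleton_left.mpr (hW.notMem_webInterior huW hux')
  · exact disjoint_singleton_right.mpr (hW.notMem_webInterior hx' (Ne.symm hux'))
  · refine hW.disjoint_webInterior fun heq => ?_
    have : u ∈ ({x', y'} : Set V) := heq ▸ Set.mem_insert u {y}
    simp_all

variable {r : ℕ}
  (hlen : ∀ x y (hx : x ∈ W) (hy : y ∈ W) (hxy : x ≠ y), (Λ x y hx hy hxy).length ≤ r + 1)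
include hlen

/-- Row `t` of the grid gives the `t`-th set; the positions shared by the two pairs are
taken from the reserved last row, so that any two rows combine into a touching quadruple. -/
theorem hasTouchingFamily_of_grid {ξ : ℕ} {z : Fin 4 → Fin (ξ + 1) → V}
    (hz : Function.Injective (Function.uncurry z)) (hzW : ∀ p t, z p t ∈ W) {i j k l : Fin 4}
    (htouch : ∀ α : Fin 4 → Fin (ξ + 1),
      Touch G W Λ (z i (α i)) (z j (α j)) (z k (α k)) (z l (α l))) :
    HasTouchingFamily G ξ (2 * max 1 r) := by
  set shared : Finset (Fin 4) := {i, j} ∩ {k, l}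
  obtain ⟨p, hp, hpk, hpl⟩ := exists_ne_of_not_pair_subset (f := fun a => z a 0) (htouch 0).1
  obtain ⟨q, hq, hqi, hqj⟩ := exists_ne_of_not_pair_subset (f := fun a => z a 0) (htouch 0).2.1
  let α : Fin ξ → Fin 4 → Fin (ξ + 1) := fun t a => if a ∈ shared then Fin.last ξ else t.castSucc
  have hfresh : ∀ t t', t ≠ t' → ∀ a b, a ∉ shared → z a (α t a) ≠ z b (α t' b) := by
    intro t t' htt' a b ha heq
    have hslot := congrArg Prod.snd (hz (a₁ := (a, α t a)) (a₂ := (b, α t' b)) heq)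
    simp only [α, if_neg ha] at hslot
    split_ifs at hslot
    · exact Fin.castSucc_ne_last t hslot
    · exact htt' (Fin.castSucc_injective _ hslot)
  have hpart : ∀ t t', t ≠ t' → ∀ a b c d, (∃ u, (u = a ∨ u = b) ∧ u ∉ shared) →
      Disjoint (webPart G W Λ (z a (α t a)) (z b (α t b)))
        (webPart G W Λ (z c (α t' c)) (z d (α t' d))) := by
    rintro t t' htt' a b c d ⟨u, hu, hush⟩
    exact hW.disjoint_webPart (u := z u (α t u)) (by rcases hu with rfl | rfl <;> simp)
      (hzW _ _) (hzW _ _) (hfresh t t' htt' u c hush) (hfresh t t' htt' u d hush)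
  have hP : ∃ u, (u = i ∨ u = j) ∧ u ∉ shared := ⟨p, hp, by simp [shared, hpk, hpl]⟩
  have hQ : ∃ u, (u = k ∨ u = l) ∧ u ∉ shared := ⟨q, hq, by simp [shared, hqi, hqj]⟩
  refine ⟨fun t => webPart G W Λ (z i (α t i)) (z j (α t j)) ∪
    webPart G W Λ (z k (α t k)) (z l (α t l)), fun t t' htt' => ?_, fun t => ?_,
    fun t t' htt' hanti => ?_⟩
  · simp only [disjoint_union_left, disjoint_union_right]
    exact ⟨⟨hpart t t' htt' _ _ _ _ hP, hpart t t' htt' _ _ _ _ hQ⟩,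
      ⟨hpart t t' htt' _ _ _ _ hP, hpart t t' htt' _ _ _ _ hQ⟩⟩
  · have := card_webPart_le hlen (z i (α t i)) (z j (α t j))
    have := card_webPart_le hlen (z k (α t k)) (z l (α t l))
    exact (card_union_le _ _).trans (by omega)
  · let β : Fin 4 → Fin (ξ + 1) := fun a => if a = i ∨ a = j then α t a else α t' a
    have hβ : ∀ a, (a = k ∨ a = l) → β a = α t' a := by
      intro a ha
      by_cases h : a = i ∨ a = j
      · simp [β, α, shared, h, ha]
      · exact if_neg h
    have h := (htouch β).2.2
    rw [hβ k (.inl rfl), hβ l (.inr rfl), show β i = α t i from if_pos (.inl rfl),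
      show β j = α t j from if_pos (.inr rfl)] at h
    exact h (hanti.mono (coe_subset.mpr subset_union_left) (coe_subset.mpr subset_union_right))

theorem hasTouchingFamily_of_touch {ξ M : ℕ} (hM : 4 * (ξ + 1) ≤ M) {w : Fin M → V}
    (hw : Function.Injective w) (hwW : ∀ a, w a ∈ W)
    (hhom : ∀ σ τ : Fin 4 → Fin M, StrictMono σ → StrictMono τ →
      touchPattern G W Λ (w ∘ σ) = touchPattern G W Λ (w ∘ τ))
    {σ : Fin 4 → Fin M} (hσ : StrictMono σ) {i j k l : Fin 4}
    (h : Touch G W Λ (w (σ i)) (w (σ j)) (w (σ k)) (w (σ l))) :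
    HasTouchingFamily G ξ (2 * max 1 r) :=
  hW.hasTouchingFamily_of_grid hlen (z := fun p t => w (blockIndex hM p t))
    (hw.comp (blockIndex_injective hM)) (fun _ _ => hwW _)
    fun α => (congrArg (· i j k l) (hhom σ _ hσ (strictMono_blockIndex hM α))).mp h

end IsWeb

end Web

theorem statement_5_general (r ξ s : ℕ) :
    ∃ Ω : ℕ, 0 < Ω ∧
      ∀ (V : Type) [Fintype V] [DecidableEq V] (G : SimpleGraph V) (W : Finset V)
        (Λ : ∀ x y : V, x ∈ W → y ∈ W → x ≠ y → G.Walk x y),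
        IsWeb G W Λ → W.card = Ω →
        (∀ x y (hx : x ∈ W) (hy : y ∈ W) (hxy : x ≠ y), (Λ x y hx hy hxy).length ≤ r + 1) →
        -- (a)
        (∃ X : Fin ξ → Finset V,
          (∀ i j, i ≠ j → Disjoint (X i) (X j)) ∧
          (∀ i, (X i).card ≤ max (r + 3) (2 * r)) ∧
          (∀ i j, i ≠ j → ¬ Anticomplete G ↑(X i) ↑(X j))) ∨
        -- (b)
        (∃ S : Finset V, S ⊆ W ∧ S.card = s ∧
          StableSet G ↑S ∧
          (∀ x ∈ S, ∀ y ∈ S, ∀ z ∈ S, x ≠ y → x ≠ z →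
            ∀ (hy : y ∈ W) (hz : z ∈ W) (hyz : y ≠ z),
              Anticomplete G {x} (walkInterior G (Λ y z hy hz hyz))) ∧
          (∀ x ∈ S, ∀ y ∈ S, ∀ x' ∈ S, ∀ y' ∈ S,
            ∀ (hx : x ∈ W) (hy : y ∈ W) (hx' : x' ∈ W) (hy' : y' ∈ W)
              (hxy : x ≠ y) (hxy' : x' ≠ y'), ({x, y} : Set V) ≠ {x', y'} →
              Anticomplete G (walkInterior G (Λ x y hx hy hxy))
                (walkInterior G (Λ x' y' hx' hy' hxy')))) := by
  set M := s + 4 * (ξ + 1)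
  obtain ⟨n, hn⟩ := exists_strictMono_homogeneous (Fin 4 → Fin 4 → Fin 4 → Fin 4 → Prop) 4 M
  refine ⟨n + 1, n.succ_pos, fun V _ _ G W Λ hW hWcard hlen => ?_⟩
  let ψ : Fin (n + 1) → V := fun a => (W.equivFinOfCardEq hWcard).symm a
  obtain ⟨e, he, hhom⟩ := hn (n + 1) n.le_succ fun τ => touchPattern G W Λ (ψ ∘ τ)
  let w := ψ ∘ e
  have hw : Function.Injective w :=
    (Subtype.val_injective.comp (Equiv.injective _)).comp he.injective
  have hwW : ∀ a, w a ∈ W := fun a => ((W.equivFinOfCardEq hWcard).symm (e a)).2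
  by_cases htouch : ∃ σ : Fin 4 → Fin M, StrictMono σ ∧
      ∃ i j k l, Touch G W Λ (w (σ i)) (w (σ j)) (w (σ k)) (w (σ l))
  · obtain ⟨σ, hσ, i, j, k, l, h⟩ := htouch
    exact .inl ((hW.hasTouchingFamily_of_touch hlen (by omega) hw hwW hhom hσ h).mono (by omega))
  · push Not at htouch
    have hsep := forall_of_forall_strictMono (by rw [Fintype.card_fin]; omega)
      (P := fun a b c d => ¬ Touch G W Λ (w a) (w b) (w c) (w d)) htouch
    let S := univ.map ⟨w ∘ Fin.castLE (Nat.le_add_right s _), hw.comp (Fin.castLE_injective _)⟩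
    refine .inr ⟨S, fun x hx => ?_, by simp [S], separated_of_forall_not_touch ?_⟩
    · obtain ⟨a, -, rfl⟩ := mem_map.mp hx
      exact hwW _
    · simp only [S, mem_map, mem_univ, true_and, Function.Embedding.coeFn_mk, Function.comp_apply]
      rintro _ ⟨a, rfl⟩ _ ⟨b, rfl⟩ _ ⟨c, rfl⟩ _ ⟨d, rfl⟩
      exact hsep _ _ _ _

/-- For all `r ∈ ℕ ∪ {0}` and `ξ, s ∈ ℕ⁺` there is `Ω ∈ ℕ⁺` such that for every graph
`G` and every `(r, Ω)`-web `(W, Λ)` in `G`, one of the following holds: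
(a) there are pairwise disjoint subsets `X_1, …, X_ξ` of `V(G)`, each of cardinality at
most `max {r+3, 2r}`, no two of which are anticomplete in `G`; or (b) there is an
`s`-subset `S ⊆ W` which is stable, with every `x ∈ S` anticomplete to `Λ*_{y,z}` for
all three vertices `x, y, z ∈ S`, and with `Λ*_{x,y}`, `Λ*_{x',y'}` anticomplete for
all distinct 2-subsets `{x,y}, {x',y'}` of `S`. -/
theorem statement_5 (r ξ s : ℕ) (hξ : 0 < ξ) (hs : 0 < s) :
    ∃ Ω : ℕ, 0 < Ω ∧
      ∀ (V : Type) [Fintype V] [DecidableEq V] (G : SimpleGraph V) (W : Finset V)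
        (Λ : ∀ x y : V, x ∈ W → y ∈ W → x ≠ y → G.Walk x y),
        IsWeb G W Λ → W.card = Ω →
        (∀ x y (hx : x ∈ W) (hy : y ∈ W) (hxy : x ≠ y), (Λ x y hx hy hxy).length ≤ r + 1) →
        -- (a)
        (∃ X : Fin ξ → Finset V,
          (∀ i j, i ≠ j → Disjoint (X i) (X j)) ∧
          (∀ i, (X i).card ≤ max (r + 3) (2 * r)) ∧
          (∀ i j, i ≠ j → ¬ Anticomplete G ↑(X i) ↑(X j))) ∨
        -- (b)
        (∃ S : Finset V, S ⊆ W ∧ S.card = s ∧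
          StableSet G ↑S ∧
          (∀ x ∈ S, ∀ y ∈ S, ∀ z ∈ S, x ≠ y → x ≠ z →
            ∀ (hy : y ∈ W) (hz : z ∈ W) (hyz : y ≠ z),
              Anticomplete G {x} (walkInterior G (Λ y z hy hz hyz))) ∧
          (∀ x ∈ S, ∀ y ∈ S, ∀ x' ∈ S, ∀ y' ∈ S,
            ∀ (hx : x ∈ W) (hy : y ∈ W) (hx' : x' ∈ W) (hy' : y' ∈ W)
              (hxy : x ≠ y) (hxy' : x' ≠ y'), ({x, y} : Set V) ≠ {x', y'} →
              Anticomplete G (walkInterior G (Λ x y hx hy hxy))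
                (walkInterior G (Λ x' y' hx' hy' hxy')))) :=
  statement_5_general r ξ s
end
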